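/- arXiv:0811.1863 — 15 statements merged into one kernel-verified Lean document; each statement's English description precedes it below -/
import Mathlib

section
/- Cauchy determinant formula: Let K be a field, m a natural number, and a, b : Fin m → K be such that a i ≠ b j for all i, j. Then the determinant of the m×m matrix with entries (a i − b j)⁻¹ equals (∏_{i<j} (a i − a j) · ∏_{i<j} (b j − b i)) / ∏_{i,j} (a i − b j). -/
/-!
Pivoting on the top-left entry of a Cauchy matrix leaves, as Schur complement, the Cauchy matrix
of the remaining points with row `i` rescaled by `(a₀ - aᵢ) / (aᵢ - b₀)` and column `j` by
`(bⱼ - b₀) / (a₀ - bⱼ)`. Induction on the size then assembles these factors into the product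
formula.
-/

open Finset

theorem Fin.prod_prod_Ioi_succ {M : Type*} [CommMonoid M] {m : ℕ}
    (f : Fin (m + 1) → Fin (m + 1) → M) :
    ∏ i, ∏ j ∈ Ioi i, f i j =
      (∏ j : Fin m, f 0 j.succ) * ∏ i : Fin m, ∏ j ∈ Ioi i, f i.succ j.succ := by
  rw [Fin.prod_univ_succ, Fin.prod_Ioi_zero]
  simp only [Fin.prod_Ioi_succ]

theorem Fin.prod_prod_univ_succ {M : Type*} [CommMonoid M] {m : ℕ}
    (f : Fin (m + 1) → Fin (m + 1) → M) :
    ∏ i, ∏ j, f i j = f 0 0 * (∏ j : Fin m, f 0 j.succ) * (∏ i : Fin m, f i.succ 0) *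
      ∏ i : Fin m, ∏ j : Fin m, f i.succ j.succ := by
  simp only [Fin.prod_univ_succ, prod_mul_distrib]
  ac_rfl

namespace Matrix

variable {K : Type*} [Field K] {m : ℕ}

theorem det_succ_eq_mul_det_schurComplement (M : Matrix (Fin (m + 1)) (Fin (m + 1)) K)
    (h : M 0 0 ≠ 0) :
    M.det = M 0 0 *
      (of fun i j : Fin m => M i.succ j.succ - M i.succ 0 / M 0 0 * M 0 j.succ).det := by
  let c : Fin (m + 1) → K := Fin.cases 0 fun i => M i.succ 0 / M 0 0
  let N : Matrix (Fin (m + 1)) (Fin (m + 1)) K := of fun i j => M i j - c i * M 0 j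
  have hN : M.det = N.det :=
    det_eq_of_forall_row_eq_smul_add_const c 0 rfl fun i j => by
      cases i using Fin.cases <;> simp [N, c]
  rw [hN, det_succ_column_zero, Fin.sum_univ_succ]
  simp [N, c, h, submatrix]

def cauchy {n : Type*} (a b : n → K) : Matrix n n K :=
  of fun i j => (a i - b j)⁻¹

@[simp]
theorem cauchy_apply {n : Type*} (a b : n → K) (i j : n) : cauchy a b i j = (a i - b j)⁻¹ :=
  rfl

theorem cauchy_schurComplement (a b : Fin (m + 1) → K) (hab : ∀ i j, a i ≠ b j) :
    (of fun i j : Fin m => cauchy a b i.succ j.succ -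
        cauchy a b i.succ 0 / cauchy a b 0 0 * cauchy a b 0 j.succ) =
      of fun i j => (a 0 - a i.succ) / (a i.succ - b 0) *
        ((b j.succ - b 0) / (a 0 - b j.succ) *
          cauchy (fun i : Fin m => a i.succ) (fun j => b j.succ) i j) := by
  have hab' : ∀ i j, a i - b j ≠ 0 := fun i j => sub_ne_zero.mpr (hab i j)
  ext i j
  simp only [of_apply, cauchy_apply]
  field_simp [hab']
  ring

theorem det_cauchy_succ (a b : Fin (m + 1) → K) (hab : ∀ i j, a i ≠ b j) :
    (cauchy a b).det = (a 0 - b 0)⁻¹ * (∏ i : Fin m, (a 0 - a i.succ) / (a i.succ - b 0)) *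
      (∏ j : Fin m, (b j.succ - b 0) / (a 0 - b j.succ)) *
        (cauchy (fun i : Fin m => a i.succ) (fun j => b j.succ)).det := by
  have h00 : cauchy a b 0 0 ≠ 0 := inv_ne_zero (sub_ne_zero.mpr (hab 0 0))
  rw [det_succ_eq_mul_det_schurComplement _ h00, cauchy_schurComplement a b hab, cauchy_apply,
    mul_assoc, mul_assoc, ← det_mul_row, ← det_mul_column]
  rfl

end Matrix

/-- Cauchy determinant formula: for `a b : Fin m → K` with `a i ≠ b j` for all `i, j`,
the determinant of the Cauchy matrix with entries `(a i − b j)⁻¹` equals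
`(∏_{i<j} (a i − a j) · ∏_{i<j} (b j − b i)) / ∏_{i,j} (a i − b j)`. -/
theorem cauchy_determinant {K : Type*} [Field K] (m : ℕ) (a b : Fin m → K)
    (hab : ∀ i j, a i ≠ b j) :
    (Matrix.of fun i j => (a i - b j)⁻¹).det =
      ((∏ i, ∏ j ∈ Finset.Ioi i, (a i - a j)) * ∏ i, ∏ j ∈ Finset.Ioi i, (b j - b i)) /
        ∏ i, ∏ j, (a i - b j) := by
  induction m with
  | zero => simp
  | succ m ih =>
    have hab' : ∀ i j, a i - b j ≠ 0 := fun i j => sub_ne_zero.mpr (hab i j)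
    rw [← Matrix.cauchy, Matrix.det_cauchy_succ a b hab, Matrix.cauchy,
      ih _ _ fun i j => hab _ _, Fin.prod_prod_Ioi_succ,
      Fin.prod_prod_Ioi_succ (fun i j => b j - b i), Fin.prod_prod_univ_succ,
      prod_div_distrib, prod_div_distrib]
    field_simp [prod_ne_zero_iff, hab']
end

section
/- Partial-fraction identity for the inverse Cauchy matrix (Lemma 2.4 of the paper): Let K be a field, m ≥ 1, and ã, b̃ : Fin m → K with the ã_i pairwise distinct, the b̃_j pairwise distinct, and ã_i ≠ b̃_j for all i, j, so that the Cauchy matrix A with entries A i j = (ã_i − b̃_j)⁻¹ is invertible. Then for all z, w ∈ K with z ≠ ã_i for all i, w ≠ b̃_j for all j, and z ≠ w, one has ∑_{i,j} (A⁻¹)_{j i} / ((z − ã_i)(w − b̃_j)) = (1/(w − z)) · ( ∏_{k} ((w − ã_k)/(z − ã_k)) · ((z − b̃_k)/(w − b̃_k)) − 1 ). -/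
/-!
Write `N = ∏ k, (X - a k)`, `B = ∏ k, (X - b k)` and `ℓ i` for the Lagrange basis at the nodes `a`.
For `t` outside the nodes, interpolating `(N(t) B(X) - B(t) N(X)) / (X - t)`, a polynomial of
degree `< m`, at the `a i` gives
`(w - t) * ∑ i, B(a i) / (a i - t) * ℓ i(w) = B(w) - B(t) / N(t) * N(w)`.
At `t = b j` the last term vanishes, so `x i = B(a i) ℓ i(w) / B(w)` solves `x ᵥ* A = (w - b)⁻¹`,
i.e. `x = (w - b)⁻¹ ᵥ* A⁻¹`; at `t = z` the same identity evaluates `∑ i, x i / (z - a i)`, which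
is the left-hand side. The Cauchy matrix `A` is invertible: by the barycentric formula, a vector
in its left kernel gives an interpolant at the `a i` that vanishes at every `b j`, hence is zero.
-/

open Finset Polynomial

namespace Lagrange

variable {K ι : Type*} [Field K] [DecidableEq ι] {s : Finset ι} {v : ι → K}

theorem eval_eq_sum_eval_mul_eval_basis (hvs : Set.InjOn v s) {p : K[X]} (hp : p.degree < #s)
    (x : K) : p.eval x = ∑ i ∈ s, p.eval (v i) * (Lagrange.basis s v i).eval x := by
  conv_lhs => rw [eq_interpolate hvs hp]
  simp only [interpolate_apply, eval_finsetSum, eval_mul, eval_C]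

theorem sub_mul_sum_eval_div_sub_mul_eval_basis (hvs : Set.InjOn v s) {p : K[X]}
    (hp : p.degree ≤ #s) {t : K} (ht : ∀ i ∈ s, t ≠ v i) (w : K) :
    (w - t) * ∑ i ∈ s, p.eval (v i) / (v i - t) * (Lagrange.basis s v i).eval w =
      p.eval w - p.eval t / (nodal s v).eval t * (nodal s v).eval w := by
  set N := nodal s v
  have hNt : N.eval t ≠ 0 := eval_nodal_not_at_node ht
  set f := N.eval t • p - p.eval t • N
  have hf_eval : ∀ x, f.eval x = N.eval t * p.eval x - p.eval t * N.eval x := fun x => by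
    simp only [f, eval_sub, eval_smul, smul_eq_mul]
  have hf_deg : f.degree ≤ #s := by
    refine (degree_sub_le _ _).trans (max_le ((degree_smul_le _ p).trans hp) ?_)
    exact (degree_smul_le _ N).trans (degree_nodal (s := s) (v := v)).le
  have hq_deg : (f /ₘ (X - C t)).degree < #s := by
    rcases eq_or_ne f 0 with h0 | h0
    · simp [h0]
    · exact (degree_divByMonic_lt _ _ h0 (by simp)).trans_le hf_deg
  have hfq : (X - C t) * (f /ₘ (X - C t)) = f :=
    mul_divByMonic_eq_iff_isRoot.2 (by rw [IsRoot, hf_eval]; ring)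
  generalize f /ₘ (X - C t) = q at hq_deg hfq
  have hq_eval : ∀ x, (x - t) * q.eval x = N.eval t * p.eval x - p.eval t * N.eval x :=
    fun x => by simpa [hf_eval] using congr_arg (eval x) hfq
  have hq_node : ∀ i ∈ s, q.eval (v i) = N.eval t * (p.eval (v i) / (v i - t)) := fun i hi => by
    rw [mul_div_assoc', eq_div_iff (sub_ne_zero.2 (ht i hi).symm), mul_comm, hq_eval,
      eval_nodal_at_node hi, mul_zero, sub_zero]
  have hq_w := hq_eval w
  rw [eval_eq_sum_eval_mul_eval_basis hvs hq_deg w,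
    sum_congr rfl fun i hi => by rw [hq_node i hi]] at hq_w
  simp only [mul_assoc, ← mul_sum] at hq_w
  rw [div_mul_eq_mul_div, ← mul_right_inj' hNt, mul_sub, mul_div_cancel₀ _ hNt]
  linear_combination hq_w

end Lagrange

open Matrix Lagrange

section Cauchy

variable {K ι : Type*} [Field K] [Fintype ι] [DecidableEq ι]

def cauchyMatrix {m n : Type*} (a : m → K) (b : n → K) : Matrix m n K :=
  of fun i j => (a i - b j)⁻¹

theorem isUnit_cauchyMatrix {a b : ι → K} (ha : a.Injective) (hb : b.Injective)
    (hab : ∀ i j, a i ≠ b j) : IsUnit (cauchyMatrix a b) := by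
  rw [isUnit_iff_isUnit_det, isUnit_iff_ne_zero, Ne, ← exists_vecMul_eq_zero_iff]
  rintro ⟨x, hx0, hx⟩
  obtain ⟨r, hxr⟩ : ∃ r : ι → K, ∀ i, nodalWeight univ a i * r i = x i :=
    ⟨fun i => x i / nodalWeight univ a i, fun i =>
      mul_div_cancel₀ (x i) (nodalWeight_ne_zero ha.injOn (mem_univ i))⟩
  have hr : interpolate univ a r = 0 := by
    refine eq_zero_of_degree_lt_of_eval_index_eq_zero univ hb.injOn
      (degree_interpolate_lt r ha.injOn) fun j _ => ?_
    have hxj : ∑ i, x i * (a i - b j)⁻¹ = 0 := congr_fun hx j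
    rw [eval_interpolate_not_at_node r fun i _ => (hab i j).symm, ← neg_eq_zero, ← mul_neg,
      ← sum_neg_distrib]
    simp only [mul_right_comm _ _ (r _), hxr, ← mul_neg, ← inv_neg, neg_sub, hxj, mul_zero]
  refine hx0 (funext fun i => ?_)
  rw [← hxr, ← eval_interpolate_at_node r ha.injOn (mem_univ i), hr, eval_zero, mul_zero,
    Pi.zero_apply]

noncomputable def cauchySolution (a b : ι → K) (w : K) (i : ι) : K :=
  (nodal univ b).eval (a i) * (Lagrange.basis univ a i).eval w / (nodal univ b).eval w

theorem cauchySolution_vecMul_cauchyMatrix {a b : ι → K} (ha : a.Injective)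
    (hab : ∀ i j, a i ≠ b j) {w : K} (hw : ∀ j, w ≠ b j) :
    cauchySolution a b w ᵥ* cauchyMatrix a b = fun j => (w - b j)⁻¹ := by
  ext j
  have key := sub_mul_sum_eval_div_sub_mul_eval_basis ha.injOn
    (degree_nodal (s := univ) (v := b)).le    (fun i _ => (hab i j).symm) w
  rw [eval_nodal_at_node (mem_univ j), zero_div, zero_mul, sub_zero] at key
  have hBw : (nodal univ b).eval w ≠ 0 := eval_nodal_not_at_node fun j _ => hw j
  simp only [vecMul, dotProduct, cauchyMatrix, of_apply, cauchySolution]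
  calc _ = (∑ i, (nodal univ b).eval (a i) / (a i - b j) * (Lagrange.basis univ a i).eval w) /
        (nodal univ b).eval w := by
        rw [sum_div]
        exact sum_congr rfl fun i _ => by ring
    _ = (w - b j)⁻¹ := by
        rw [div_eq_iff hBw, ← key]
        field_simp [sub_ne_zero.2 (hw j)]

theorem sum_cauchySolution_div_sub {a b : ι → K} (ha : a.Injective) {z w : K}
    (hz : ∀ i, z ≠ a i) (hw : ∀ j, w ≠ b j) (hzw : z ≠ w) :
    ∑ i, cauchySolution a b w i / (z - a i) =
      (w - z)⁻¹ * ((∏ k, ((w - a k) / (z - a k)) * ((z - b k) / (w - b k))) - 1) := by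
  have key := sub_mul_sum_eval_div_sub_mul_eval_basis ha.injOn
    (degree_nodal (s := univ) (v := b)).le    (fun i _ => hz i) w
  have hBw : (nodal univ b).eval w ≠ 0 := eval_nodal_not_at_node fun j _ => hw j
  simp only [cauchySolution, eval_nodal] at key hBw ⊢
  have hAz : ∏ k, (z - a k) ≠ 0 := prod_ne_zero_iff.2 fun k _ => sub_ne_zero.2 (hz k)
  have hwz : w - z ≠ 0 := sub_ne_zero.2 hzw.symm
  have hS : ∑ i, (∏ k, (a i - b k)) / (a i - z) * (Lagrange.basis univ a i).eval w =
      (∏ k, (w - b k) - (∏ k, (z - b k)) / (∏ k, (z - a k)) * ∏ k, (w - a k)) / (w - z) := by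
    rw [← key, mul_div_cancel_left₀ _ hwz]
  calc _ = -(∑ i, (∏ k, (a i - b k)) / (a i - z) * (Lagrange.basis univ a i).eval w) /
        ∏ k, (w - b k) := by
        rw [neg_div, sum_div, ← sum_neg_distrib]
        refine sum_congr rfl fun i _ => ?_
        rw [div_eq_mul_inv _ (z - a i), ← neg_sub, inv_neg]
        ring
    _ = _ := by
        rw [hS, prod_mul_distrib, prod_div_distrib, prod_div_distrib]
        field_simp
        ring

end Cauchy

theorem inverse_cauchy_partial_fraction_general {K : Type*} [Field K] (m : ℕ)
    (ta tb : Fin m → K) (hta : Function.Injective ta) (htb : Function.Injective tb)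
    (hab : ∀ i j, ta i ≠ tb j) (z w : K)
    (hz : ∀ i, z ≠ ta i) (hw : ∀ j, w ≠ tb j) (hzw : z ≠ w) :
    ∑ i, ∑ j, (Matrix.of fun i j => (ta i - tb j)⁻¹)⁻¹ j i / ((z - ta i) * (w - tb j)) =
      (w - z)⁻¹ *
        ((∏ k, ((w - ta k) / (z - ta k)) * ((z - tb k) / (w - tb k))) - 1) := by
  have hdet := (isUnit_iff_isUnit_det _).1 (isUnit_cauchyMatrix hta htb hab)
  have hsol : (fun j => (w - tb j)⁻¹) ᵥ* (cauchyMatrix ta tb)⁻¹ = cauchySolution ta tb w := by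
    rw [← cauchySolution_vecMul_cauchyMatrix hta hab hw, vecMul_vecMul, mul_nonsing_inv _ hdet,
      vecMul_one]
  rw [← sum_cauchySolution_div_sub hta hz hw hzw, ← hsol]
  refine sum_congr rfl fun i _ => ?_
  simp only [vecMul, dotProduct, sum_div, cauchyMatrix]
  refine sum_congr rfl fun j _ => ?_
  simp only [div_eq_mul_inv, mul_inv]
  ring

/-- Partial-fraction identity for the inverse Cauchy matrix (Lemma 2.4):
for a Cauchy matrix `A i j = (ã i − b̃ j)⁻¹` with pairwise distinct `ã i`, pairwise
distinct `b̃ j` and `ã i ≠ b̃ j`, and any `z, w` avoiding the `ã i`, `b̃ j` with `z ≠ w`,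
`∑_{i,j} (A⁻¹)_{j i} / ((z − ã i)(w − b̃ j))
  = (1/(w − z)) · (∏_k ((w − ã k)/(z − ã k)) · ((z − b̃ k)/(w − b̃ k)) − 1)`. -/
theorem inverse_cauchy_partial_fraction {K : Type*} [Field K] (m : ℕ) (hm : 1 ≤ m)
    (ta tb : Fin m → K) (hta : Function.Injective ta) (htb : Function.Injective tb)
    (hab : ∀ i j, ta i ≠ tb j) (z w : K)
    (hz : ∀ i, z ≠ ta i) (hw : ∀ j, w ≠ tb j) (hzw : z ≠ w) :
    ∑ i, ∑ j, (Matrix.of fun i j => (ta i - tb j)⁻¹)⁻¹ j i / ((z - ta i) * (w - tb j)) =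
      (w - z)⁻¹ *
        ((∏ k, ((w - ta k) / (z - ta k)) * ((z - tb k) / (w - tb k))) - 1) :=
  inverse_cauchy_partial_fraction_general m ta tb hta htb hab z w hz hw hzw
end

section
/- Fraction decomposition identity: Let K be a field, m ≥ 1, and let a, b, U, V ∈ K with U ≠ V, U ≠ b, V ≠ a. Then (1/(V − U)) · ( ((U − a)/(U − b))^m · ((V − b)/(V − a))^m − 1 ) = (a − b) · ∑_{k=0}^{m−1} ∑_{i=0}^{m−1} ∑_{j=0}^{m−1} C(k, i) · C(k, j) · (b − a)^{i+j} · (−1)^{j+1} · (U − b)^{−(i+1)} · (V − a)^{−(j+1)}. -/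
lemma sumA {K : Type*} [Field K] (m k : ℕ) (hk : k < m) (c x : K) (hx : x ≠ 0) :
    ∑ i ∈ Finset.range m, (k.choose i : K) * c ^ i * (x ^ (i + 1))⁻¹
      = (x + c) ^ k / x ^ (k + 1) := by
  rw [← Finset.sum_subset (Finset.range_subset_range.2 hk) (by
    intro i _ hi
    have : k < i := by simp only [Finset.mem_range, not_lt] at hi; omega
    simp [Nat.choose_eq_zero_of_lt this])]
  rw [eq_div_iff (pow_ne_zero _ hx), Finset.sum_mul, add_comm x c, add_pow]
  refine Finset.sum_congr rfl fun i hi => ?_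
  have hik : i ≤ k := Nat.lt_succ_iff.1 (Finset.mem_range.1 hi)
  have hxk : x ^ (k + 1) = x ^ (i + 1) * x ^ (k - i) := by
    rw [← pow_add]; congr 1; omega
  rw [hxk]
  field_simp

/-- Fraction decomposition identity: for a field `K`, `m ≥ 1`, and `a b U V : K`
with `U ≠ V`, `U ≠ b`, `V ≠ a`,
`(1/(V − U)) · (((U − a)/(U − b))^m · ((V − b)/(V − a))^m − 1)
 = (a − b) · ∑_{k,i,j=0}^{m−1} C(k,i)·C(k,j)·(b−a)^{i+j}·(−1)^{j+1}
     ·(U−b)^{−(i+1)}·(V−a)^{−(j+1)}`. -/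
theorem fraction_decomposition {K : Type*} [Field K] (m : ℕ) (hm : 1 ≤ m)
    (a b U V : K) (hUV : U ≠ V) (hUb : U ≠ b) (hVa : V ≠ a) :
    (V - U)⁻¹ * (((U - a) / (U - b)) ^ m * ((V - b) / (V - a)) ^ m - 1) =
      (a - b) *
        ∑ k ∈ Finset.range m, ∑ i ∈ Finset.range m, ∑ j ∈ Finset.range m,
          (k.choose i : K) * (k.choose j : K) * (b - a) ^ (i + j) * (-1 : K) ^ (j + 1) *
            ((U - b) ^ (i + 1))⁻¹ * ((V - a) ^ (j + 1))⁻¹ := by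
  have hx : U - b ≠ 0 := sub_ne_zero.2 hUb
  have hy : V - a ≠ 0 := sub_ne_zero.2 hVa
  have hvu : V - U ≠ 0 := sub_ne_zero.2 (Ne.symm hUV)
  set x := U - b with hxdef
  set y := V - a with hydef
  set c := b - a with hcdef
  set r : K := ((x + c) * (y - c)) / (x * y) with hrdef
  have key : ∀ k ∈ Finset.range m,
      (∑ i ∈ Finset.range m, ∑ j ∈ Finset.range m,
        (k.choose i : K) * (k.choose j : K) * c ^ (i + j) * (-1 : K) ^ (j + 1) *
          ((x ^ (i + 1))⁻¹) * ((y ^ (j + 1))⁻¹))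
      = -(((x + c) ^ k / x ^ (k + 1)) * ((y - c) ^ k / y ^ (k + 1))) := by
    intro k hk
    have hk' := Finset.mem_range.1 hk
    have h1 := sumA m k hk' c x hx
    have h2 := sumA m k hk' (-c) y hy
    have hfac : (∑ i ∈ Finset.range m, ∑ j ∈ Finset.range m,
        (k.choose i : K) * (k.choose j : K) * c ^ (i + j) * (-1 : K) ^ (j + 1) *
          ((x ^ (i + 1))⁻¹) * ((y ^ (j + 1))⁻¹))
        = -((∑ i ∈ Finset.range m, (k.choose i : K) * c ^ i * (x ^ (i + 1))⁻¹) *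
            (∑ j ∈ Finset.range m, (k.choose j : K) * (-c) ^ j * (y ^ (j + 1))⁻¹)) := by
      rw [Finset.sum_mul_sum, ← Finset.sum_neg_distrib]
      refine Finset.sum_congr rfl fun i _ => ?_
      rw [← Finset.sum_neg_distrib]
      refine Finset.sum_congr rfl fun j _ => ?_
      rw [pow_add, pow_succ, neg_pow c]
      ring
    rw [hfac, h1, h2]
    ring_nf
  rw [Finset.sum_congr rfl key]
  have hterm : ∀ k ∈ Finset.range m,
      -(((x + c) ^ k / x ^ (k + 1)) * ((y - c) ^ k / y ^ (k + 1)))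
      = -(r ^ k / (x * y)) := by
    intro k _
    have hrk : r ^ k = (x + c) ^ k * (y - c) ^ k / (x ^ k * y ^ k) := by
      rw [hrdef, div_pow, mul_pow, mul_pow]
    rw [hrk, div_div, div_mul_div_comm]
    congr 2
    rw [pow_succ, pow_succ]
    ring
  rw [Finset.sum_congr rfl hterm]
  rw [Finset.sum_neg_distrib, ← Finset.sum_div, mul_neg]
  have hUa : U - a = x + c := by rw [hxdef, hcdef]; ring
  have hVb : V - b = y - c := by rw [hydef, hcdef]; ring
  rw [hUa, hVb]
  have hrm : ((x + c) / x) ^ m * ((y - c) / y) ^ m = r ^ m := by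
    rw [← mul_pow, div_mul_div_comm, ← hrdef]
  rw [hrm]
  have hgeo : r ^ m - 1 = (∑ k ∈ Finset.range m, r ^ k) * (r - 1) := (geom_sum_mul r m).symm
  rw [hgeo]
  have hr1 : r - 1 = c * (V - U) / (x * y) := by
    rw [hrdef, hxdef, hydef, hcdef]
    field_simp
    ring
  rw [hr1]
  have hab : a - b = -c := by rw [hcdef]; ring
  rw [hab]
  field_simp
end

section
/- Bordered Pascal determinant identity: Let R be a commutative ring, m ≥ 1, and x, y ∈ R. Let M be the (m+1)×(m+1) matrix over R with entries M 0 0 = 0, M 0 (j+1) = (x + 1)^j for 0 ≤ j ≤ m−1, M (i+1) 0 = (y + 1)^i for 0 ≤ i ≤ m−1, and M (i+1) (j+1) = C(i + j, i) (as an element of R) for 0 ≤ i, j ≤ m−1. Then (1 − x·y) · det M = (x·y)^m − 1. -/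
open Finset Matrix

private lemma pascal_sum_aux (i j n : ℕ) (h : i < n) :
    ∑ k ∈ range n, i.choose k * j.choose k = (i + j).choose i := by
  have h1 : ∑ k ∈ range n, i.choose k * j.choose k
      = ∑ k ∈ range (i + 1), i.choose k * j.choose k := by
    refine (Finset.sum_subset (Finset.range_subset_range.2 h) ?_).symm
    intro k _ hk
    rw [Finset.mem_range, not_lt] at hk
    rw [Nat.choose_eq_zero_of_lt (by omega), zero_mul]
  rw [h1, Nat.add_choose_eq,
    Finset.Nat.sum_antidiagonal_eq_sum_range_succ (fun a b => i.choose a * j.choose b)]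
  rw [← Finset.sum_range_reflect (fun k => i.choose k * j.choose k) (i + 1)]
  refine Finset.sum_congr rfl fun k hk => ?_
  rw [Finset.mem_range] at hk
  have hk' : k ≤ i := by omega
  rw [Nat.add_sub_cancel, Nat.choose_symm hk']

private lemma pow_expand_aux {R : Type*} [CommRing R] (x : R) (n N : ℕ) (h : n < N) :
    ∑ k ∈ range N, (n.choose k : R) * x ^ k = (x + 1) ^ n := by
  have h1 : ∑ k ∈ range N, (n.choose k : R) * x ^ k
      = ∑ k ∈ range (n + 1), (n.choose k : R) * x ^ k := by
    refine (Finset.sum_subset (Finset.range_subset_range.2 h) ?_).symm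
    intro k _ hk
    rw [Finset.mem_range, not_lt] at hk
    rw [Nat.choose_eq_zero_of_lt (by omega)]
    simp
  rw [h1, add_pow]
  refine Finset.sum_congr rfl fun k _ => ?_
  ring

/-- Bordered Pascal determinant identity: for a commutative ring `R`, `m ≥ 1`, `x y : R`,
let `M` be the `(m+1)×(m+1)` matrix with `M 0 0 = 0`, first row `(x+1)^j`
(`0 ≤ j ≤ m−1`), first column `(y+1)^i` (`0 ≤ i ≤ m−1`), and lower-right `m×m`
block the symmetric Pascal matrix `C(i+j, i)`. Then `(1 − x·y) · det M = (x·y)^m − 1`. -/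
theorem bordered_pascal_det {R : Type*} [CommRing R] (m : ℕ) (hm : 1 ≤ m) (x y : R) :
    (1 - x * y) *
        (Matrix.of fun i j : Fin (m + 1) =>
            if (i : ℕ) = 0 then
              (if (j : ℕ) = 0 then (0 : R) else (x + 1) ^ ((j : ℕ) - 1))
            else
              (if (j : ℕ) = 0 then (y + 1) ^ ((i : ℕ) - 1)
               else (((((i : ℕ) - 1) + ((j : ℕ) - 1)).choose ((i : ℕ) - 1) : R)))).det =
      (x * y) ^ m - 1 := by
  set A : Matrix (Fin (m + 1)) (Fin (m + 1)) R := Matrix.of fun i j =>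
    if (i : ℕ) = 0 then
      (if (j : ℕ) = 0 then -(∑ k ∈ range m, (x * y) ^ k) else x ^ ((j : ℕ) - 1))
    else
      (if (j : ℕ) = 0 then 0 else ((((i : ℕ) - 1).choose ((j : ℕ) - 1) : ℕ) : R)) with hA
  set B : Matrix (Fin (m + 1)) (Fin (m + 1)) R := Matrix.of fun i j =>
    if (j : ℕ) = 0 then
      (if (i : ℕ) = 0 then 1 else y ^ ((i : ℕ) - 1))
    else
      (if (i : ℕ) = 0 then 0 else ((((j : ℕ) - 1).choose ((i : ℕ) - 1) : ℕ) : R)) with hB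
  have hM : (Matrix.of fun i j : Fin (m + 1) =>
            if (i : ℕ) = 0 then
              (if (j : ℕ) = 0 then (0 : R) else (x + 1) ^ ((j : ℕ) - 1))
            else
              (if (j : ℕ) = 0 then (y + 1) ^ ((i : ℕ) - 1)
               else (((((i : ℕ) - 1) + ((j : ℕ) - 1)).choose ((i : ℕ) - 1) : R)))) = A * B := by
    ext i j
    rw [Matrix.mul_apply]
    induction i using Fin.cases with
    | zero =>
      induction j using Fin.cases with
      | zero =>
        simp only [hA, hB, Matrix.of_apply, Fin.sum_univ_succ, Fin.val_zero, Fin.val_succ]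
        simp only [Nat.succ_ne_zero, if_false, if_true, eq_self_iff_true, Nat.add_sub_cancel]
        rw [Fin.sum_univ_eq_sum_range (fun k => x ^ k * y ^ k)]
        simp [mul_pow]
      | succ j =>
        simp only [hA, hB, Matrix.of_apply, Fin.sum_univ_succ, Fin.val_zero, Fin.val_succ]
        simp only [Nat.succ_ne_zero, if_false, if_true, eq_self_iff_true, Nat.add_sub_cancel]
        rw [mul_zero, zero_add]
        rw [Fin.sum_univ_eq_sum_range (fun k => x ^ k * ((j : ℕ).choose k : R))]
        rw [← pow_expand_aux x (j : ℕ) m j.isLt]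
        exact Finset.sum_congr rfl fun k _ => by ring
    | succ i =>
      induction j using Fin.cases with
      | zero =>
        simp only [hA, hB, Matrix.of_apply, Fin.sum_univ_succ, Fin.val_zero, Fin.val_succ]
        simp only [Nat.succ_ne_zero, if_false, if_true, eq_self_iff_true, Nat.add_sub_cancel]
        rw [zero_mul, zero_add]
        rw [Fin.sum_univ_eq_sum_range (fun k => ((i : ℕ).choose k : R) * y ^ k)]
        rw [← pow_expand_aux y (i : ℕ) m i.isLt]
      | succ j =>
        simp only [hA, hB, Matrix.of_apply, Fin.sum_univ_succ, Fin.val_zero, Fin.val_succ]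
        simp only [Nat.succ_ne_zero, if_false, if_true, eq_self_iff_true, Nat.add_sub_cancel]
        rw [zero_mul, zero_add]
        rw [Fin.sum_univ_eq_sum_range
          (fun k => ((i : ℕ).choose k : R) * ((j : ℕ).choose k : R))]
        rw [← pascal_sum_aux (i : ℕ) (j : ℕ) m i.isLt]
        push_cast
        ring
  rw [hM, Matrix.det_mul]
  have hdetA : A.det = -(∑ k ∈ range m, (x * y) ^ k) := by
    rw [Matrix.det_succ_column_zero]
    rw [Finset.sum_eq_single 0]
    · simp only [hA, Matrix.of_apply, Fin.val_zero, pow_zero, one_mul, if_true,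
        eq_self_iff_true]
      rw [Matrix.det_of_lowerTriangular]
      · simp
      · intro i j hij
        simp only [Matrix.submatrix_apply, hA, Matrix.of_apply, Fin.succAbove_zero,
          Fin.val_succ, Nat.succ_ne_zero, if_false, Nat.add_sub_cancel]
        rw [OrderDual.toDual_lt_toDual] at hij
        simp [Nat.choose_eq_zero_of_lt hij]
    · intro i _ hi
      obtain ⟨i, rfl⟩ := Fin.exists_succ_eq.mpr hi
      have : A i.succ 0 = 0 := by simp [hA, Fin.val_succ]
      rw [this, mul_zero, zero_mul]
    · simp
  have hdetB : B.det = 1 := by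
    rw [Matrix.det_succ_row_zero]
    rw [Finset.sum_eq_single 0]
    · simp only [hB, Matrix.of_apply, Fin.val_zero, pow_zero, one_mul, if_true,
        eq_self_iff_true]
      rw [Matrix.det_of_upperTriangular]
      · simp
      · intro i j hij
        simp only [Matrix.submatrix_apply, hB, Matrix.of_apply, Fin.succAbove_zero,
          Fin.val_succ, Nat.succ_ne_zero, if_false, Nat.add_sub_cancel]
        simp only [id] at hij
        simp [Nat.choose_eq_zero_of_lt hij]
    · intro j _ hj
      obtain ⟨j, rfl⟩ := Fin.exists_succ_eq.mpr hj
      have : B 0 j.succ = 0 := by simp [hB, Fin.val_succ]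
      rw [this, mul_zero, zero_mul]
    · simp
  rw [hdetA, hdetB, mul_one]
  have hg := geom_sum_mul (x * y) m
  linear_combination hg
end

section
/- Asymptotics of the moment matrix entries (Lemma 2.2 of the paper): Fix real numbers ã < b̃. For n ≥ 1 define a_n = √(2n)·(1 + ã·n^{−1/3}), b_n = √(2n)·(1 − b̃·n^{−1/3}), and u_n = a_n·b_n/2. Then lim_{n→∞} √(2π) · n^{1/6} · (n/e)^n · ∑_{j=0}^{∞} u_n^j/(n+j)! = 1/(b̃ − ã). -/
/-!
Taylor's formula with integral remainder for `exp` gives, for every real `u`,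
`∑ⱼ uʲ/(n+1+j)! = (1/n!) ∫₀¹ (1-x)ⁿ e^{ux} dx`. With `N = n + 1`, Stirling's formula turns the
prefactor `√(2π) N^{1/6} (N/e)^N / n!` into `N^{2/3}` up to a factor tending to `1`, so it remains to
show `N^{2/3} ∫₀¹ (1-x)ⁿ e^{ux} dx → 1/(b̃ - ã)`. Here `u - n = -(b̃ - ã) N^{2/3} + O(N^{1/3})`, so
after the substitution `x = y / N^{2/3}` the integrand `(1 - y/N^{2/3})ⁿ e^{uy/N^{2/3}}` tends to
`e^{-(b̃ - ã) y}`, using `log (1 - t) = -t + O(t²)` and `n/N^{4/3} → 0`, and it is dominated by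
`e^{-(b̃ - ã) y/2}` because `1 - t ≤ e^{-t}`. Dominated convergence concludes.
-/

open Filter Real MeasureTheory Finset Topology
open scoped Nat

lemma integral_one_sub_pow_mul_exp_succ (u : ℝ) (n : ℕ) :
    ((n : ℝ) + 1) * ∫ x in (0 : ℝ)..1, (1 - x) ^ n * exp (u * x)
      = 1 + u * ∫ x in (0 : ℝ)..1, (1 - x) ^ (n + 1) * exp (u * x) := by
  have hpow (x : ℝ) :
      HasDerivAt (fun x => -(1 - x) ^ (n + 1)) (((n : ℝ) + 1) * (1 - x) ^ n) x := by
    refine (((hasDerivAt_id x).const_sub 1).pow (n + 1)).neg.congr_deriv ?_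
    simp
  have hexp (x : ℝ) : HasDerivAt (fun x => exp (u * x)) (u * exp (u * x)) x := by
    simpa [mul_comm] using ((hasDerivAt_id x).const_mul u).exp
  have hparts := intervalIntegral.integral_mul_deriv_eq_deriv_mul (a := 0) (b := 1)
    (fun x _ => hpow x) (fun x _ => hexp x)
    (by apply Continuous.intervalIntegrable; fun_prop)
    (by apply Continuous.intervalIntegrable; fun_prop)
  simp only [neg_mul, mul_assoc, mul_left_comm _ u, intervalIntegral.integral_neg,
    intervalIntegral.integral_const_mul] at hparts
  norm_num at hparts
  linarith

lemma exp_eq_sum_range_add_integral (u : ℝ) (n : ℕ) :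
    exp u = ∑ k ∈ range (n + 1), u ^ k / k !
      + u ^ (n + 1) / n ! * ∫ x in (0 : ℝ)..1, (1 - x) ^ n * exp (u * x) := by
  induction n with
  | zero =>
    simp only [zero_add, range_one, sum_singleton, pow_zero, Nat.factorial_zero, Nat.cast_one,
      div_one, pow_one, one_mul, intervalIntegral.mul_integral_comp_mul_left, mul_zero, mul_one,
      integral_exp, exp_zero, add_sub_cancel]
  | succ n ih =>
    have hrec := integral_one_sub_pow_mul_exp_succ u n
    rw [ih, sum_range_succ _ (n + 1), Nat.factorial_succ, Nat.cast_mul]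
    generalize ∫ x in (0 : ℝ)..1, (1 - x) ^ n * exp (u * x) = I at hrec ⊢
    generalize ∫ x in (0 : ℝ)..1, (1 - x) ^ (n + 1) * exp (u * x) = J at hrec ⊢
    field_simp
    push_cast
    linear_combination u ^ (n + 1) * hrec

lemma tsum_pow_div_factorial_add_succ (u : ℝ) (n : ℕ) :
    ∑' j : ℕ, u ^ j / ((n + 1 + j)! : ℝ)
      = (∫ x in (0 : ℝ)..1, (1 - x) ^ n * exp (u * x)) / n ! := by
  rcases eq_or_ne u 0 with rfl | hu
  · rw [tsum_eq_single 0 fun j hj => by simp [hj]]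
    simp only [pow_zero, add_zero, Nat.factorial_succ, Nat.cast_mul, Nat.cast_succ]
    field_simp
    simpa using (integral_one_sub_pow_mul_exp_succ 0 n).symm
  have htail : ∑' j : ℕ, u ^ (j + (n + 1)) / ((j + (n + 1))! : ℝ)
      = exp u - ∑ k ∈ range (n + 1), u ^ k / k ! := by
    rw [eq_sub_iff_add_eq', Real.exp_eq_exp_ℝ, NormedSpace.exp_eq_tsum_div]
    exact (Real.summable_pow_div_factorial u).sum_add_tsum_nat_add (n + 1)
  apply mul_left_cancel₀ (pow_ne_zero (n + 1) hu)
  rw [← tsum_mul_left]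
  calc ∑' j : ℕ, u ^ (n + 1) * (u ^ j / ((n + 1 + j)! : ℝ))
      = exp u - ∑ k ∈ range (n + 1), u ^ k / k ! := by
        rw [← htail]
        congr 1 with j
        rw [add_comm j, pow_add u (n + 1) j, mul_div_assoc]
    _ = _ := by
        rw [exp_eq_sum_range_add_integral u n]
        ring

lemma one_sub_pow_mul_exp_le {t : ℝ} (ht : t ≤ 1) (n : ℕ) (u : ℝ) :
    (1 - t) ^ n * exp (u * t) ≤ exp ((u - n) * t) := by
  have hpow : (1 - t) ^ n ≤ exp (-t) ^ n :=
    pow_le_pow_left₀ (by linarith) (one_sub_le_exp_neg t) n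
  calc (1 - t) ^ n * exp (u * t) ≤ exp (-t) ^ n * exp (u * t) := by gcongr
    _ = exp ((u - n) * t) := by rw [← exp_nat_mul, ← exp_add]; ring_nf

lemma mul_intervalIntegral_eq_setIntegral_indicator {E : Type*} [NormedAddCommGroup E]
    [NormedSpace ℝ E] {m : ℝ} (hm : 0 < m) (f : ℝ → E) :
    m • ∫ x in (0 : ℝ)..1, f x
      = ∫ y in Set.Ioi 0, (Set.Ioc 0 m).indicator (fun y => f (y / m)) y := by
  rw [integral_indicator measurableSet_Ioc, Measure.restrict_restrict measurableSet_Ioc,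
    Set.inter_eq_self_of_subset_left Set.Ioc_subset_Ioi_self,
    ← intervalIntegral.integral_of_le hm.le, intervalIntegral.integral_comp_div f hm.ne',
    zero_div, div_self hm.ne']

lemma tendsto_nat_mul_log_one_sub_add {t : ℕ → ℝ} (ht : Tendsto t atTop (𝓝 0))
    (hnt : Tendsto (fun n => n * t n ^ 2) atTop (𝓝 0)) :
    Tendsto (fun n => n * (log (1 - t n) + t n)) atTop (𝓝 0) := by
  have hsmall : ∀ᶠ n in atTop, |t n| ≤ 1 / 2 :=
    ht.abs.eventually (ge_mem_nhds (by norm_num : |(0 : ℝ)| < 1 / 2))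
  refine squeeze_zero_norm' ?_ (by simpa using hnt.const_mul 2)
  filter_upwards [hsmall] with n hn
  have hlog := abs_log_sub_add_sum_range_le (x := t n) (by linarith) 1
  simp only [range_one, sum_singleton, Nat.cast_zero, zero_add, pow_one, div_one] at hlog
  rw [norm_mul, Real.norm_natCast, Real.norm_eq_abs, add_comm]
  have : |t n| ^ 2 / (1 - |t n|) ≤ 2 * t n ^ 2 := by
    rw [div_le_iff₀ (by linarith), sq_abs]; nlinarith [sq_nonneg (t n)]
  calc (n : ℝ) * |t n + log (1 - t n)| ≤ n * (2 * t n ^ 2) := by gcongr; exact hlog.trans this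
    _ = 2 * (n * t n ^ 2) := by ring

lemma tendsto_one_sub_pow_mul_exp {t u : ℕ → ℝ} {L : ℝ} (ht : Tendsto t atTop (𝓝 0))
    (hnt : Tendsto (fun n => n * t n ^ 2) atTop (𝓝 0))
    (hu : Tendsto (fun n => (u n - n) * t n) atTop (𝓝 L)) :
    Tendsto (fun n => (1 - t n) ^ n * exp (u n * t n)) atTop (𝓝 (exp L)) := by
  have hexp := (tendsto_nat_mul_log_one_sub_add ht hnt).add hu
  rw [zero_add] at hexp
  refine (continuous_exp.tendsto L).comp hexp |>.congr' ?_
  filter_upwards [ht.eventually (gt_mem_nhds one_pos)] with n hn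
  rw [Function.comp_apply, ← exp_log (pow_pos (sub_pos.2 hn) n), log_pow, ← exp_add]
  ring_nf

lemma tendsto_mul_integral_one_sub_pow_mul_exp {m u : ℕ → ℝ} {c : ℝ} (hc : 0 < c)
    (hm : Tendsto m atTop atTop) (hnm : Tendsto (fun n => n / m n ^ 2) atTop (𝓝 0))
    (hu : Tendsto (fun n => (u n - n) / m n) atTop (𝓝 (-c))) :
    Tendsto (fun n => m n * ∫ x in (0 : ℝ)..1, (1 - x) ^ n * exp (u n * x))
      atTop (𝓝 (1 / c)) := by
  set F : ℕ → ℝ → ℝ := fun n =>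
    (Set.Ioc 0 (m n)).indicator (fun y => (1 - y / m n) ^ n * exp (u n * (y / m n)))
  have hF_meas (n : ℕ) : AEStronglyMeasurable (F n) (volume.restrict (Set.Ioi 0)) :=
    (Continuous.aestronglyMeasurable (by fun_prop)).indicator measurableSet_Ioc
  have hF_bound : ∀ᶠ n in atTop, ∀ᵐ y ∂(volume.restrict (Set.Ioi 0)),
      ‖F n y‖ ≤ exp (-(c / 2) * y) := by
    have hc2 : -c < -(c / 2) := by linarith
    filter_upwards [hm.eventually_gt_atTop 0, hu.eventually (ge_mem_nhds hc2)] with n hm0 hun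
    refine Eventually.of_forall fun y => ?_
    dsimp only [F]
    by_cases hy : y ∈ Set.Ioc 0 (m n)
    · have ht1 : y / m n ≤ 1 := (div_le_one hm0).2 hy.2
      rw [Set.indicator_of_mem hy, norm_of_nonneg (by have := sub_nonneg.2 ht1; positivity)]
      calc (1 - y / m n) ^ n * exp (u n * (y / m n)) ≤ exp ((u n - n) * (y / m n)) :=
            one_sub_pow_mul_exp_le ht1 n (u n)
        _ = exp ((u n - n) / m n * y) := by ring_nf
        _ ≤ exp (-(c / 2) * y) := by gcongr; exact hy.1.le
    · rw [Set.indicator_of_notMem hy, norm_zero]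
      positivity
  have hF_lim : ∀ᵐ y ∂(volume.restrict (Set.Ioi 0)),
      Tendsto (fun n => F n y) atTop (𝓝 (exp (-c * y))) := by
    rw [ae_restrict_iff' measurableSet_Ioi]
    refine Eventually.of_forall fun y (hy : 0 < y) => ?_
    have ht : Tendsto (fun n => y / m n) atTop (𝓝 0) := by
      simpa [div_eq_mul_inv] using (tendsto_inv_atTop_zero.comp hm).const_mul y
    have hnt : Tendsto (fun n => n * (y / m n) ^ 2) atTop (𝓝 0) := by
      rw [← mul_zero (y ^ 2 : ℝ)]
      exact (hnm.const_mul _).congr fun n => by ring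
    have hlim := tendsto_one_sub_pow_mul_exp ht hnt ((hu.mul_const y).congr fun n => by ring)
    refine hlim.congr' ?_
    filter_upwards [hm.eventually_ge_atTop y] with n hn
    exact (Set.indicator_of_mem (show y ∈ Set.Ioc 0 (m n) from ⟨hy, hn⟩) (fun y => _)).symm
  have hdct := tendsto_integral_filter_of_dominated_convergence _ (Eventually.of_forall hF_meas)
    hF_bound (integrableOn_exp_mul_Ioi (by linarith) 0) hF_lim
  rw [integral_exp_mul_Ioi (by linarith), mul_zero, exp_zero, div_neg, ← neg_div, neg_neg] at hdct
  refine hdct.congr' ?_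
  filter_upwards [hm.eventually_gt_atTop 0] with n hn
  rw [← smul_eq_mul, mul_intervalIntegral_eq_setIntegral_indicator hn]

lemma tendsto_rpow_two_thirds_mul_integral_one_sub_pow_mul_exp {ta tb : ℝ} (h : ta < tb) :
    Tendsto (fun n : ℕ => ((n : ℝ) + 1) ^ ((2 : ℝ) / 3) * ∫ x in (0 : ℝ)..1, (1 - x) ^ n *
      exp (((n + 1) * (1 + ta * ((n : ℝ) + 1) ^ (-(1 : ℝ) / 3)) *
        (1 - tb * ((n : ℝ) + 1) ^ (-(1 : ℝ) / 3))) * x)) atTop (𝓝 (1 / (tb - ta))) := by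
  have hN : Tendsto (fun n : ℕ => (n : ℝ) + 1) atTop atTop :=
    tendsto_atTop_add_const_right _ 1 tendsto_natCast_atTop_atTop
  set s : ℕ → ℝ := fun n => ((n : ℝ) + 1) ^ ((1 : ℝ) / 3)
  have hs_pos (n : ℕ) : 0 < s n := by positivity
  have hs_cube (n : ℕ) : s n ^ 3 = n + 1 := by
    rw [← rpow_natCast, ← rpow_mul (by positivity)]; norm_num
  have hs_nat (n : ℕ) : (n : ℝ) = s n ^ 3 - 1 := by rw [hs_cube]; ring
  have hs_sq (n : ℕ) : ((n : ℝ) + 1) ^ ((2 : ℝ) / 3) = s n ^ 2 := by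
    rw [← rpow_natCast, ← rpow_mul (by positivity)]; norm_num
  have hs_inv (n : ℕ) : ((n : ℝ) + 1) ^ (-(1 : ℝ) / 3) = (s n)⁻¹ := by
    rw [neg_div, rpow_neg (by positivity)]
  have hs_inv_lim : Tendsto (fun n => (s n)⁻¹) atTop (𝓝 0) :=
    tendsto_inv_atTop_zero.comp ((tendsto_rpow_atTop (by norm_num)).comp hN)
  apply tendsto_mul_integral_one_sub_pow_mul_exp (sub_pos.2 h)
  · exact (tendsto_rpow_atTop (by norm_num)).comp hN
  · have hlim := hs_inv_lim.sub (hs_inv_lim.pow 4)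
    rw [zero_pow four_ne_zero, sub_zero] at hlim
    refine hlim.congr fun n => ?_
    rw [hs_sq, hs_nat]
    field_simp
  · have hlim := ((hs_inv_lim.const_mul (ta * tb)).sub (hs_inv_lim.pow 2)).const_sub (-(tb - ta))
    rw [mul_zero, zero_pow two_ne_zero, sub_zero, sub_zero] at hlim
    refine hlim.congr fun n => ?_
    rw [hs_sq, hs_inv, ← hs_cube, hs_nat]
    have := (hs_pos n).ne'
    field_simp
    ring

lemma sqrt_two_pi_mul_pow_div_factorial_eq (n : ℕ) :
    √(2 * π) * ((n : ℝ) + 1) ^ ((1 : ℝ) / 6) * (((n : ℝ) + 1) / exp 1) ^ (n + 1) / n !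
      = √π / Stirling.stirlingSeq (n + 1) * ((n : ℝ) + 1) ^ ((2 : ℝ) / 3) := by
  have hN : (0 : ℝ) < n + 1 := by positivity
  have hrpow : √((n : ℝ) + 1) * ((n : ℝ) + 1) ^ ((2 : ℝ) / 3)
      = ((n : ℝ) + 1) ^ ((1 : ℝ) / 6) * ((n : ℝ) + 1) := by
    rw [sqrt_eq_rpow, ← rpow_add hN, ← rpow_add_one hN.ne']
    norm_num
  rw [Stirling.stirlingSeq, Nat.factorial_succ, sqrt_mul two_pos.le, sqrt_mul two_pos.le]
  push_cast
  field_simp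
  linear_combination -hrpow

/-- Asymptotics of the moment matrix entries (Lemma 2.2): with
`a_n = √(2n)·(1 + ã·n^{−1/3})`, `b_n = √(2n)·(1 − b̃·n^{−1/3})`, `u_n = a_n·b_n/2`
for fixed reals `ã < b̃`, one has
`lim_{n→∞} √(2π) · n^{1/6} · (n/e)^n · ∑_{j≥0} u_n^j/(n+j)! = 1/(b̃ − ã)`. -/
theorem moment_matrix_asymptotics (ta tb : ℝ) (h : ta < tb) :
    Tendsto (fun n : ℕ =>
        Real.sqrt (2 * π) * (n : ℝ) ^ ((1 : ℝ) / 6) * ((n : ℝ) / Real.exp 1) ^ n *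
          ∑' j : ℕ,
            (Real.sqrt (2 * n) * (1 + ta * (n : ℝ) ^ (-(1 : ℝ) / 3)) *
                (Real.sqrt (2 * n) * (1 - tb * (n : ℝ) ^ (-(1 : ℝ) / 3))) / 2) ^ j /
              ((n + j).factorial : ℝ))
      atTop (nhds (1 / (tb - ta))) := by
  rw [← tendsto_add_atTop_iff_nat 1]
  have hstirling :
      Tendsto (fun n : ℕ => √π / Stirling.stirlingSeq (n + 1)) atTop (𝓝 1) := by
    have hπ : √π ≠ 0 := (sqrt_pos.2 pi_pos).ne'
    have := (tendsto_const_nhds (x := √π)).div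
      (Stirling.tendsto_stirlingSeq_sqrt_pi.comp (tendsto_add_atTop_nat 1)) hπ
    rwa [div_self hπ] at this
  have hbase (N A B : ℝ) (hN : 0 ≤ N) : √(2 * N) * A * (√(2 * N) * B) / 2 = N * A * B := by
    linear_combination A * B / 2 * mul_self_sqrt (mul_nonneg zero_le_two hN)
  have hlim := hstirling.mul (tendsto_rpow_two_thirds_mul_integral_one_sub_pow_mul_exp h)
  rw [one_mul] at hlim
  refine hlim.congr fun n => ?_
  push_cast
  rw [hbase _ _ _ (by positivity), tsum_pow_div_factorial_add_succ, ← mul_assoc,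
    ← sqrt_two_pi_mul_pow_div_factorial_eq]
  ring
end

section
/- Asymptotics of derivative moments (equation (4.15) of the paper): Fix real numbers ã < b̃ and a natural number p. For n ≥ 1 define a_n = √(2n)·(1 + ã·n^{−1/3}), b_n = √(2n)·(1 − b̃·n^{−1/3}), u_n = a_n·b_n/2, and let F_n : ℝ → ℝ be the real-analytic function F_n(u) = ∑_{j=0}^{∞} u^j/(n+j)!. Then lim_{n→∞} √(2π) · n^{1/6 + 2p/3} · (n/e)^n · (1/p!) · (iteratedDeriv p F_n)(u_n) = (b̃ − ã)^{−(p+1)}. -/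
open Filter Real Topology
open scoped Nat

/-!
Differentiating termwise, `F_n^{(p)}(u) / p! = ∑_k C(k+p, p) u^k / (n+p+k)!`. At `u = n q` the
`k`-th term is `C(k+p, p) q^k / (n+p)!` times `n^k (n+p)! / (n+p+k)! ∈ [1 - k(p+k)/n, 1]`, so the
sum is the negative binomial series `(1-q)^{-(p+1)} / (n+p)!` up to a relative error
`O(1 / (n (1-q)^2))`. Along `u_n = n q_n` one has `1 - q_n ~ (b̃ - ã) n^{-1/3}`, so this error is
`O(n^{-1/3})`, and Stirling's formula together with `(n+p)! ~ n! n^p` turns the prefactor into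
`(b̃ - ã)^{-(p+1)}`.
-/

theorem hasDerivAt_tsum_mul_pow {b : ℕ → ℝ} (hb : ∀ j, |b j| ≤ 1 / j !) (x : ℝ) :
    HasDerivAt (fun y => ∑' j, b j * y ^ j) (∑' j, (j + 1) * b (j + 1) * x ^ j) x := by
  set R := |x| + 1
  have hR : 1 ≤ R := le_add_of_nonneg_left (abs_nonneg x)
  have hxR : |x| < R := lt_add_one _
  have hbound : ∀ j (y : ℝ), |y| < R → ‖b j * (j * y ^ (j - 1))‖ ≤ (2 * R) ^ j / j ! := by
    intro j y hy
    have hj : (j : ℝ) ≤ 2 ^ j := mod_cast (Nat.lt_two_pow_self).le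
    have hyj : |y| ^ (j - 1) ≤ R ^ j :=
      (pow_le_pow_left₀ (abs_nonneg y) hy.le _).trans (pow_le_pow_right₀ hR (Nat.sub_le j 1))
    rw [norm_mul, norm_mul, norm_pow, Real.norm_natCast, Real.norm_eq_abs, Real.norm_eq_abs,
      mul_pow, div_eq_mul_one_div, mul_comm]
    exact mul_le_mul (mul_le_mul hj hyj (by positivity) (by positivity)) (hb j) (abs_nonneg _)
      (by positivity)
  have hsum : Summable fun j => (2 * R) ^ j / j ! := Real.summable_pow_div_factorial _
  have hsum₀ : Summable fun j => b j * x ^ j := by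
    refine .of_norm_bounded (Real.summable_pow_div_factorial R) fun j => ?_
    rw [norm_mul, norm_pow, Real.norm_eq_abs, Real.norm_eq_abs, div_eq_mul_one_div, mul_comm]
    exact mul_le_mul (pow_le_pow_left₀ (abs_nonneg x) hxR.le _) (hb j) (abs_nonneg _)
      (by positivity)
  have hx : x ∈ Metric.ball (0 : ℝ) R := by simpa using hxR
  have hderiv := hasDerivAt_tsum_of_isPreconnected hsum Metric.isOpen_ball
    (convex_ball (0 : ℝ) R).isPreconnected (fun j y _ => (hasDerivAt_pow j y).const_mul (b j))
    (fun j y hy => hbound j y (by simpa using hy)) hx hsum₀ hx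
  rw [(Summable.of_norm_bounded hsum fun j => hbound j x hxR).tsum_eq_zero_add] at hderiv
  refine hderiv.congr_deriv ?_
  simp only [Nat.cast_zero, zero_mul, mul_zero, zero_add, Nat.add_sub_cancel, Nat.cast_add,
    Nat.cast_one]
  exact tsum_congr fun j => by ring

theorem iteratedDeriv_tsum_mul_pow {b : ℕ → ℝ} (hb : ∀ j, |b j| ≤ 1 / j !) (p : ℕ) :
    iteratedDeriv p (fun y => ∑' j, b j * y ^ j) =
      fun y => ∑' j, (p + j).descFactorial p * b (p + j) * y ^ j := by
  induction p with
  | zero => simp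
  | succ p ih =>
    have hb' : ∀ j, |(p + j).descFactorial p * b (p + j)| ≤ 1 / j ! := by
      intro j
      have hfac : ((j ! : ℕ) : ℝ) * (p + j).descFactorial p = (p + j)! := by
        have := Nat.factorial_mul_descFactorial (Nat.le_add_right p j)
        rw [Nat.add_sub_cancel_left] at this
        exact_mod_cast this
      rw [abs_mul, Nat.abs_cast, le_div_iff₀ (by positivity)]
      calc ((p + j).descFactorial p : ℝ) * |b (p + j)| * j !
          ≤ (p + j).descFactorial p * (1 / (p + j)!) * j ! := by gcongr; exact hb _
        _ = 1 := by rw [← hfac]; field_simp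
    rw [iteratedDeriv_succ, ih]
    funext y
    rw [(hasDerivAt_tsum_mul_pow hb' y).deriv]
    refine tsum_congr fun j => ?_
    rw [show p + 1 + j = p + (j + 1) by omega, Nat.descFactorial_succ,
      show p + (j + 1) - p = j + 1 by omega]
    push_cast
    ring

theorem pow_mul_factorial_div_factorial_le_one (n p k : ℕ) :
    (n : ℝ) ^ k * (n + p)! / (n + p + k)! ≤ 1 := by
  rw [div_le_one (by positivity)]
  have h : n ^ k * (n + p)! ≤ (n + p + k)! :=
    calc n ^ k * (n + p)! ≤ (n + p)! * (n + p + 1) ^ k := by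
          rw [mul_comm]; gcongr; omega
      _ ≤ (n + p + k)! := Nat.factorial_mul_pow_le_factorial
  exact_mod_cast h

theorem one_sub_div_le_pow_mul_factorial_div_factorial {n : ℕ} (hn : 0 < n) (p k : ℕ) :
    1 - k * (p + k) / (n : ℝ) ≤ (n : ℝ) ^ k * (n + p)! / (n + p + k)! := by
  set N : ℝ := n + p + k
  have hn' : (0 : ℝ) < n := mod_cast hn
  have hN : (n : ℝ) ≤ N := by simp only [N, add_assoc]; exact le_add_of_nonneg_right (by positivity)
  have hN0 : 0 < N := hn'.trans_le hN
  have hfac : ((n + p + k)! : ℝ) ≤ (n + p)! * N ^ k := by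
    have h := Nat.factorial_mul_ascFactorial (n + p) k ▸
      Nat.mul_le_mul_left (n + p)! (Nat.ascFactorial_le_pow_add (n + p) k)
    simp only [N]
    exact_mod_cast h
  have hbernoulli : 1 + k * (-(p + k) / N) ≤ (1 + -(p + k) / N) ^ k := by
    refine one_add_mul_le_pow ?_ k
    rw [le_div_iff₀ hN0]
    simp only [N]; linarith
  have hsplit : 1 + -(p + k) / N = n / N := by field_simp; simp only [N]; ring
  calc 1 - k * (p + k) / (n : ℝ) ≤ 1 + k * (-(p + k) / N) := by
        rw [mul_div_assoc, neg_div, mul_neg, ← sub_eq_add_neg]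
        gcongr
    _ ≤ (n / N) ^ k := hsplit ▸ hbernoulli
    _ = n ^ k * (n + p)! / ((n + p)! * N ^ k) := by rw [div_pow]; field_simp
    _ ≤ (n : ℝ) ^ k * (n + p)! / (n + p + k)! := by gcongr

theorem choose_mul_le_mul_choose (p k : ℕ) :
    (k + p).choose p * (k * (p + k)) ≤ (p + 1) * (p + 2) * (k + (p + 2)).choose (p + 2) := by
  have h₁ := Nat.add_one_mul_choose_eq (k + p) p
  have h₂ := Nat.add_one_mul_choose_eq (k + p + 1) (p + 1)
  calc (k + p).choose p * (k * (p + k))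
      ≤ (k + p).choose p * ((k + p + 1) * (k + p + 1 + 1)) := by
        gcongr (k + p).choose p * ?_
        exact Nat.mul_le_mul (by omega) (by omega)
    _ = (k + p + 1 + 1) * ((k + p + 1) * (k + p).choose p) := by ring
    _ = (p + 1) * (p + 2) * (k + (p + 2)).choose (p + 2) := by
        rw [h₁, ← mul_assoc, h₂, show k + (p + 2) = k + p + 1 + 1 by omega]; ring

theorem mul_tsum_choose_mul_pow_mul_mem_Icc {n : ℝ} (hn : 0 < n) (p : ℕ) {q : ℝ} (hq₀ : 0 ≤ q)
    (hq₁ : q < 1) {w : ℕ → ℝ} (hw₀ : ∀ k, 0 ≤ w k) (hw₁ : ∀ k, w k ≤ 1)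
    (hw : ∀ k, 1 - k * (p + k) / n ≤ w k) :
    (1 - q) ^ (p + 1) * ∑' k, (k + p).choose p * q ^ k * w k ∈
      Set.Icc (1 - (p + 1) * (p + 2) / (n * (1 - q) ^ 2)) 1 := by
  have hq : ‖q‖ < 1 := by rwa [Real.norm_of_nonneg hq₀]
  have h1q : 0 < 1 - q := sub_pos.2 hq₁
  set c : ℕ → ℝ := fun k => (k + p).choose p * q ^ k
  have hc₀ : ∀ k, 0 ≤ c k := fun k => by positivity
  have hc : HasSum c (1 / (1 - q) ^ (p + 1)) := hasSum_choose_mul_geometric_of_norm_lt_one p hq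
  have hd := (hasSum_choose_mul_geometric_of_norm_lt_one (p + 2) hq).mul_left
    ((p + 1) * (p + 2) / n)
  have hcw : HasSum (fun k => c k * w k) (∑' k, c k * w k) :=
    (hc.summable.of_nonneg_of_le (fun k => mul_nonneg (hc₀ k) (hw₀ k))
      fun k => mul_le_of_le_one_right (hc₀ k) (hw₁ k)).hasSum
  have hlower : ∀ k, c k - (p + 1) * (p + 2) / n * ((k + (p + 2)).choose (p + 2) * q ^ k)
      ≤ c k * w k := by
    intro k
    have hchoose : ((k + p).choose p : ℝ) * (k * (p + k)) ≤
        (p + 1) * (p + 2) * (k + (p + 2)).choose (p + 2) := by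
      exact_mod_cast choose_mul_le_mul_choose p k
    calc c k - (p + 1) * (p + 2) / n * ((k + (p + 2)).choose (p + 2) * q ^ k)
        = c k - (p + 1) * (p + 2) * (k + (p + 2)).choose (p + 2) / n * q ^ k := by ring
      _ ≤ c k - (k + p).choose p * (k * (p + k)) / n * q ^ k := by
          gcongr c k - ?_ / n * q ^ k
      _ = c k * (1 - k * (p + k) / n) := by simp only [c]; ring
      _ ≤ c k * w k := mul_le_mul_of_nonneg_left (hw k) (hc₀ k)
  constructor
  · have h := hasSum_le hlower (hc.sub hd) hcw
    calc 1 - (p + 1) * (p + 2) / (n * (1 - q) ^ 2)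
        = (1 - q) ^ (p + 1) * (1 / (1 - q) ^ (p + 1) -
            (p + 1) * (p + 2) / n * (1 / (1 - q) ^ (p + 2 + 1))) := by
          field_simp; ring
      _ ≤ _ := by gcongr
  · have h := hasSum_le (fun k => mul_le_of_le_one_right (hc₀ k) (hw₁ k)) hcw hc
    calc _ ≤ (1 - q) ^ (p + 1) * (1 / (1 - q) ^ (p + 1)) := by gcongr
      _ = 1 := by field_simp

theorem iteratedDeriv_tsum_pow_div_factorial_add (n p : ℕ) (u : ℝ) :
    iteratedDeriv p (fun u : ℝ => ∑' j, u ^ j / (n + j)!) u =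
      p ! * ∑' k, (k + p).choose p * u ^ k / (n + p + k)! := by
  have hb : ∀ j, |1 / ((n + j)! : ℝ)| ≤ 1 / j ! := fun j => by
    rw [abs_of_nonneg (by positivity)]
    gcongr
    omega
  have h := congrFun (iteratedDeriv_tsum_mul_pow hb p) u
  simp only [one_div_mul_eq_div] at h
  rw [h, ← tsum_mul_left]
  refine tsum_congr fun k => ?_
  rw [Nat.descFactorial_eq_factorial_mul_choose, ← add_assoc, add_comm p k]
  push_cast
  ring

theorem mul_factorial_mul_tsum_mem_Icc {n : ℕ} (hn : 0 < n) (p : ℕ) {q : ℝ} (hq₀ : 0 ≤ q)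
    (hq₁ : q < 1) :
    (1 - q) ^ (p + 1) * ((n + p)! * ∑' k, (k + p).choose p * (n * q) ^ k / (n + p + k)!) ∈
      Set.Icc (1 - (p + 1) * (p + 2) / (n * (1 - q) ^ 2)) 1 := by
  have h := mul_tsum_choose_mul_pow_mul_mem_Icc (mod_cast hn) p hq₀ hq₁
    (w := fun k => (n : ℝ) ^ k * (n + p)! / (n + p + k)!) (fun k => by positivity)
    (pow_mul_factorial_div_factorial_le_one n p)
    (one_sub_div_le_pow_mul_factorial_div_factorial hn p)
  convert h using 3
  rw [← tsum_mul_left]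
  refine tsum_congr fun k => ?_
  rw [mul_pow]
  field_simp

theorem tendsto_factorial_mul_pow_div_factorial_add (p : ℕ) :
    Tendsto (fun n : ℕ => (n ! * (n : ℝ) ^ p / (n + p)!)) atTop (𝓝 1) := by
  have hlower : Tendsto (fun n : ℕ => 1 - p * (0 + p) / (n : ℝ)) atTop (𝓝 1) := by
    simpa using (tendsto_const_div_atTop_nhds_zero_nat ((p : ℝ) * p)).const_sub 1
  refine tendsto_of_tendsto_of_tendsto_of_le_of_le' hlower tendsto_const_nhds ?_ ?_
  · filter_upwards [eventually_gt_atTop 0] with n hn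
    simpa [mul_comm] using one_sub_div_le_pow_mul_factorial_div_factorial hn 0 p
  · exact Eventually.of_forall fun n => by
      simpa [mul_comm] using pow_mul_factorial_div_factorial_le_one n 0 p

theorem tendsto_stirling_div_factorial :
    Tendsto (fun n : ℕ => √(2 * n * π) * (n / exp 1) ^ n / n !) atTop (𝓝 1) :=
  (Asymptotics.isEquivalent_iff_tendsto_one (Eventually.of_forall fun n => by positivity)).1
    Stirling.factorial_isEquivalent_stirling.symm

section RescaledArgument

variable {α c : ℝ} {q : ℕ → ℝ}

theorem eventually_mem_Ico_of_tendsto_rpow_mul_one_sub (hα₀ : 0 < α) (hc : 0 < c)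
    (hq : Tendsto (fun n : ℕ => (n : ℝ) ^ α * (1 - q n)) atTop (𝓝 c)) :
    ∀ᶠ n in atTop, q n ∈ Set.Ico 0 1 := by
  have h : Tendsto (fun n : ℕ => (n : ℝ) ^ α * (1 - q n) * (n : ℝ) ^ (-α)) atTop (𝓝 (c * 0)) :=
    hq.mul ((tendsto_rpow_neg_atTop hα₀).comp tendsto_natCast_atTop_atTop)
  filter_upwards [hq.eventually (eventually_gt_nhds hc),
    h.eventually (eventually_lt_nhds (by simp : c * 0 < 1)), eventually_gt_atTop 0]
    with n hpos hsmall hn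
  have hn' : (0 : ℝ) < n := mod_cast hn
  rw [mul_comm, ← mul_assoc, ← rpow_add hn', neg_add_cancel, rpow_zero, one_mul] at hsmall
  exact ⟨by linarith, sub_pos.1 (pos_of_mul_pos_right hpos (rpow_nonneg hn'.le α))⟩

theorem tendsto_mul_factorial_mul_tsum_choose (hα₀ : 0 < α) (hα : α < 1 / 2) (hc : 0 < c)
    (p : ℕ) (hq : Tendsto (fun n : ℕ => (n : ℝ) ^ α * (1 - q n)) atTop (𝓝 c)) :
    Tendsto (fun n : ℕ => (1 - q n) ^ (p + 1) *
      ((n + p)! * ∑' k, (k + p).choose p * (n * q n) ^ k / (n + p + k)!)) atTop (𝓝 1) := by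
  have hq' := (eventually_mem_Ico_of_tendsto_rpow_mul_one_sub hα₀ hc hq).and
    (eventually_gt_atTop 0)
  have hscale : Tendsto (fun n : ℕ => (n : ℝ) ^ (1 - 2 * α) * ((n : ℝ) ^ α * (1 - q n)) ^ 2)
      atTop atTop :=
    ((tendsto_rpow_atTop (by linarith)).comp tendsto_natCast_atTop_atTop).atTop_mul_pos
      (pow_pos hc 2) (hq.pow 2)
  have herr : Tendsto (fun n : ℕ => 1 - (p + 1) * (p + 2) / (n * (1 - q n) ^ 2)) atTop (𝓝 1) := by
    refine (sub_zero (1 : ℝ) ▸ tendsto_const_nhds.sub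
      ((tendsto_const_nhds (x := ((p : ℝ) + 1) * (p + 2))).div_atTop hscale)).congr' ?_
    filter_upwards [eventually_gt_atTop 0] with n hn
    have hn' : (0 : ℝ) < n := mod_cast hn
    rw [mul_pow, ← mul_assoc, ← rpow_mul_natCast hn'.le, ← rpow_add hn',
      show 1 - 2 * α + α * (2 : ℕ) = 1 by push_cast; ring, rpow_one]
  have hbounds := hq'.mono fun n ⟨⟨h₀, h₁⟩, hn⟩ => mul_factorial_mul_tsum_mem_Icc hn p h₀ h₁
  exact tendsto_of_tendsto_of_tendsto_of_le_of_le' herr tendsto_const_nhds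
    (hbounds.mono fun _ h => h.1) (hbounds.mono fun _ h => h.2)

theorem tendsto_rpow_mul_iteratedDeriv_tsum_pow_div_factorial_add (hα₀ : 0 < α)
    (hα : α < 1 / 2) (hc : 0 < c) (p : ℕ)
    (hq : Tendsto (fun n : ℕ => (n : ℝ) ^ α * (1 - q n)) atTop (𝓝 c)) :
    Tendsto (fun n : ℕ => √(2 * π) * (n : ℝ) ^ (1 / 2 + p - α * (p + 1)) * (n / exp 1) ^ n *
      (1 / p !) * iteratedDeriv p (fun u : ℝ => ∑' j, u ^ j / (n + j)!) (n * q n))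
      atTop (𝓝 (c ^ (p + 1))⁻¹) := by
  have hA := (tendsto_stirling_div_factorial.mul
    (tendsto_factorial_mul_pow_div_factorial_add p)).mul
    ((hq.pow (p + 1)).inv₀ (pow_ne_zero _ hc.ne'))
  rw [one_mul, one_mul] at hA
  have hB := tendsto_mul_factorial_mul_tsum_choose hα₀ hα hc p hq
  refine (mul_one (c ^ (p + 1))⁻¹ ▸ hA.mul hB).congr' ?_
  filter_upwards [eventually_mem_Ico_of_tendsto_rpow_mul_one_sub hα₀ hc hq,
    eventually_gt_atTop 0] with n hq₁ hn
  have hn' : (0 : ℝ) < n := mod_cast hn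
  have hexp : (n : ℝ) ^ (1 / 2 + p - α * (p + 1)) * ((n : ℝ) ^ α) ^ (p + 1) = √n * n ^ p := by
    rw [← rpow_mul_natCast hn'.le, ← rpow_add hn', sqrt_eq_rpow, ← rpow_natCast, ← rpow_add hn']
    push_cast
    ring_nf
  rw [iteratedDeriv_tsum_pow_div_factorial_add, show (2 : ℝ) * n * π = 2 * π * n by ring,
    sqrt_mul' _ hn'.le]
  generalize ∑' k, ((k + p).choose p : ℝ) * (n * q n) ^ k / (n + p + k)! = S
  generalize (n : ℝ) ^ (1 / 2 + p - α * (p + 1)) = N at hexp ⊢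
  have h1q : 0 < 1 - q n := sub_pos.2 hq₁.2
  simp only [mul_pow]
  field_simp
  linear_combination (-S) * hexp

end RescaledArgument

/-- Asymptotics of derivative moments (equation (4.15)): with
`a_n = √(2n)·(1 + ã·n^{−1/3})`, `b_n = √(2n)·(1 − b̃·n^{−1/3})`, `u_n = a_n·b_n/2`
and `F_n(u) = ∑_{j≥0} u^j/(n+j)!`, for fixed reals `ã < b̃` and `p : ℕ`,
`lim_{n→∞} √(2π) · n^{1/6 + 2p/3} · (n/e)^n · (1/p!) · F_n^{(p)}(u_n) = (b̃ − ã)^{−(p+1)}`. -/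
theorem derivative_moment_asymptotics (ta tb : ℝ) (h : ta < tb) (p : ℕ) :
    Tendsto (fun n : ℕ =>
        Real.sqrt (2 * π) * (n : ℝ) ^ ((1 : ℝ) / 6 + 2 * (p : ℝ) / 3) *
          ((n : ℝ) / Real.exp 1) ^ n * (1 / (p.factorial : ℝ)) *
          iteratedDeriv p (fun u : ℝ => ∑' j : ℕ, u ^ j / ((n + j).factorial : ℝ))
            (Real.sqrt (2 * n) * (1 + ta * (n : ℝ) ^ (-(1 : ℝ) / 3)) *
              (Real.sqrt (2 * n) * (1 - tb * (n : ℝ) ^ (-(1 : ℝ) / 3))) / 2))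
      atTop (nhds (((tb - ta) ^ (p + 1))⁻¹)) := by
  set x : ℕ → ℝ := fun n => (n : ℝ) ^ (-(1 : ℝ) / 3)
  have hx : Tendsto x atTop (𝓝 0) := by
    simpa only [x, neg_div, Function.comp_def] using
      (tendsto_rpow_neg_atTop (by norm_num)).comp tendsto_natCast_atTop_atTop
  have hq : Tendsto (fun n : ℕ => (n : ℝ) ^ (1 / 3 : ℝ) * (1 - (1 + ta * x n) * (1 - tb * x n)))
      atTop (𝓝 (tb - ta)) := by
    have hlim : Tendsto (fun n => tb - ta + ta * tb * x n) atTop (𝓝 (tb - ta)) := by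
      simpa using (hx.const_mul (ta * tb)).const_add (tb - ta)
    refine hlim.congr' ?_
    filter_upwards [eventually_gt_atTop 0] with n hn
    have hinv : (n : ℝ) ^ (1 / 3 : ℝ) * x n = 1 := by
      rw [← rpow_add (by positivity)]; norm_num
    linear_combination (ta - tb - ta * tb * x n) * hinv
  refine (tendsto_rpow_mul_iteratedDeriv_tsum_pow_div_factorial_add (by norm_num) (by norm_num)
    (sub_pos.2 h) p hq).congr fun n => ?_
  rw [show (1 : ℝ) / 2 + p - 1 / 3 * (p + 1) = 1 / 6 + 2 * p / 3 by ring]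
  congr 2
  linear_combination
    -(1 + ta * x n) * (1 - tb * x n) / 2 * mul_self_sqrt (by positivity : (0 : ℝ) ≤ 2 * n)
end

section
/- Iterated-derivative partial fraction identity: Let z, a, b be real numbers with z ≠ a·b/2, and let k, l be natural numbers. Then (2^{k+l}/(k!·l!)) · iteratedDeriv k (fun a' => iteratedDeriv l (fun b' => (z − a'·b'/2)⁻¹) b) a = ∑_{j=0}^{min(k,l)} 2^j · a^{l−j} · b^{k−j} · (z − a·b/2)^{−(k+l−j+1)} · (k+l−j)! / ((k−j)!·(l−j)!·j!). -/
/-!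
Differentiating in `b` first, `(z - a b / 2)⁻¹` is the inverse of an affine function of `b`, so
`∂_b^l (z - a b / 2)⁻¹ = l! (a / 2)^l (z - a b / 2)^{-(l+1)}` for every `a`. Differentiating this
`k` times in `a` by the Leibniz rule, the `j`-th term carries `∂_a^j a^l`, which vanishes for
`j > l`, and `∂_a^{k-j} (z - a b / 2)^{-(l+1)} = (l+1)⋯(l+k-j) (b / 2)^{k-j} (z - a b / 2)^{-(k+l-j+1)}`;
the factorials then collapse to the multinomial coefficient `(k+l-j)! / ((k-j)! (l-j)! j!)`.
-/

open Finset
open scoped Nat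

section Affine

variable {𝕜 F : Type*} [NontriviallyNormedField 𝕜] [NormedAddCommGroup F] [NormedSpace 𝕜 F]

/-- No differentiability is needed: for `c ≠ 0` the map `y ↦ c * y + d` is an affine
isomorphism, and for `c = 0` both sides vanish. -/
theorem deriv_comp_mul_add (f : 𝕜 → F) (c d x : 𝕜) :
    deriv (fun y => f (c * y + d)) x = c • deriv f (c * x + d) := by
  rcases eq_or_ne c 0 with rfl | hc
  · simp
  · have h := deriv_comp_add_const (fun y => f (c * y)) (d / c) (x := x)
    simp only [mul_add, mul_div_cancel₀ _ hc] at h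
    rw [h, deriv_comp_mul_left, mul_add, mul_div_cancel₀ _ hc]

theorem iteratedDeriv_comp_mul_add (n : ℕ) (f : 𝕜 → F) (c d x : 𝕜) :
    iteratedDeriv n (fun y => f (c * y + d)) x = c ^ n • iteratedDeriv n f (c * x + d) := by
  induction n generalizing x with
  | zero => simp
  | succ n ih =>
    rw [iteratedDeriv_succ, funext ih, deriv_fun_const_smul_field,
      deriv_comp_mul_add (iteratedDeriv n f), iteratedDeriv_succ, smul_smul, pow_succ]

end Affine

theorem prod_range_neg_natCast_sub {R : Type*} [CommRing R] (p n : ℕ) :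
    ∏ i ∈ range n, (-(p : R) - i) = (-1) ^ n * p.ascFactorial n := by
  calc ∏ i ∈ range n, (-(p : R) - i) = ∏ i ∈ range n, -((p + i : ℕ) : R) :=
        prod_congr rfl fun i _ => by push_cast; ring
    _ = (-1) ^ n * p.ascFactorial n := by
        rw [prod_neg, card_range, Nat.ascFactorial_eq_prod_range, Nat.cast_prod]

theorem Nat.choose_mul_descFactorial_mul_ascFactorial {k l i : ℕ} (hik : i ≤ k) (hil : i ≤ l) :
    k.choose i * l.descFactorial i * (l + 1).ascFactorial (k - i) * ((k - i)! * (l - i)! * i !) =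
      k ! * (k + l - i)! := by
  calc _ = (k.choose i * i ! * (k - i)!) * ((l - i)! * l.descFactorial i) *
        (l + 1).ascFactorial (k - i) := by ring
    _ = k ! * (l ! * (l + 1).ascFactorial (k - i)) := by
        rw [choose_mul_factorial_mul_factorial hik, factorial_mul_descFactorial hil, mul_assoc]
    _ = k ! * (k + l - i)! := by
        rw [factorial_mul_ascFactorial, show l + (k - i) = k + l - i by omega]

section Field

variable {𝕜 : Type*} [NontriviallyNormedField 𝕜]

theorem iteratedDeriv_zpow_mul_add (m : ℤ) (n : ℕ) (c d x : 𝕜) :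
    iteratedDeriv n (fun y => (c * y + d) ^ m) x =
      c ^ n * (∏ i ∈ range n, ((m : 𝕜) - i)) * (c * x + d) ^ (m - n) := by
  rw [iteratedDeriv_comp_mul_add n (· ^ m), iteratedDeriv_eq_iterate, iter_deriv_zpow,
    smul_eq_mul, mul_assoc]

theorem iteratedDeriv_inv_pow_sub_mul (p n : ℕ) (c d x : 𝕜) :
    iteratedDeriv n (fun y => ((d - c * y) ^ p)⁻¹) x =
      p.ascFactorial n * c ^ n * ((d - c * x) ^ (p + n))⁻¹ := by
  have h : ∀ y, ((d - c * y) ^ p)⁻¹ = (-c * y + d) ^ (-(p : ℤ)) := fun y => by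
    rw [zpow_neg, zpow_natCast, neg_mul, neg_add_eq_sub]
  simp only [h]
  rw [iteratedDeriv_zpow_mul_add, Int.cast_neg, Int.cast_natCast, prod_range_neg_natCast_sub,
    show -(p : ℤ) - n = -((p + n : ℕ) : ℤ) by push_cast; ring, zpow_neg, zpow_natCast, neg_mul,
    neg_add_eq_sub, ← mul_assoc, ← mul_pow, neg_mul_neg, mul_one, mul_comm (c ^ n)]

theorem iteratedDeriv_inv_sub_mul (n : ℕ) (c d x : 𝕜) :
    iteratedDeriv n (fun y => (d - c * y)⁻¹) x = n ! * c ^ n * ((d - c * x) ^ (n + 1))⁻¹ := by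
  simpa only [pow_one, Nat.one_ascFactorial, add_comm 1 n] using
    iteratedDeriv_inv_pow_sub_mul 1 n c d x

theorem iteratedDeriv_pow_mul_inv_pow_sub_mul (l p n : ℕ) {c d x : 𝕜} (hx : d - c * x ≠ 0) :
    iteratedDeriv n (fun y => y ^ l * ((d - c * y) ^ p)⁻¹) x =
      ∑ i ∈ range (n + 1), n.choose i * l.descFactorial i * p.ascFactorial (n - i) *
        x ^ (l - i) * c ^ (n - i) * ((d - c * x) ^ (p + (n - i)))⁻¹ := by
  have hg : ContDiffAt 𝕜 n (fun y => ((d - c * y) ^ p)⁻¹) x := by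
    fun_prop (disch := exact pow_ne_zero _ hx)
  rw [iteratedDeriv_fun_mul (by fun_prop) hg]
  refine sum_congr rfl fun i _ => ?_
  rw [iteratedDeriv_pow, iteratedDeriv_inv_pow_sub_mul]
  ring

end Field

/-- Iterated-derivative partial fraction identity: for reals `z, a, b` with `z ≠ a·b/2`
and naturals `k, l`,
`(2^{k+l}/(k!·l!)) · ∂_a^k ∂_b^l (z − a·b/2)⁻¹
  = ∑_{j=0}^{min(k,l)} 2^j · a^{l−j} · b^{k−j} · (z − a·b/2)^{−(k+l−j+1)}
      · (k+l−j)! / ((k−j)!·(l−j)!·j!)`. -/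
theorem iterated_deriv_partial_fraction (z a b : ℝ) (hz : z ≠ a * b / 2) (k l : ℕ) :
    ((2 : ℝ) ^ (k + l) / ((k.factorial : ℝ) * (l.factorial : ℝ))) *
        iteratedDeriv k (fun a' : ℝ => iteratedDeriv l (fun b' : ℝ => (z - a' * b' / 2)⁻¹) b) a =
      ∑ j ∈ Finset.range (min k l + 1),
        (2 : ℝ) ^ j * a ^ (l - j) * b ^ (k - j) * ((z - a * b / 2) ^ (k + l - j + 1))⁻¹ *
          ((k + l - j).factorial : ℝ) /
          (((k - j).factorial : ℝ) * ((l - j).factorial : ℝ) * (j.factorial : ℝ)) := by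
  have hinner : (fun a' : ℝ => iteratedDeriv l (fun b' : ℝ => (z - a' * b' / 2)⁻¹) b) =
      fun a' => (l ! / 2 ^ l : ℝ) * (a' ^ l * ((z - b / 2 * a') ^ (l + 1))⁻¹) := by
    funext a'
    simp only [← div_mul_eq_mul_div, iteratedDeriv_inv_sub_mul]
    rw [div_pow, mul_comm (b / 2), div_mul_eq_mul_div, div_mul_eq_mul_div]
    ring
  have hza : z - b / 2 * a ≠ 0 := fun h => hz (by linarith)
  rw [hinner, iteratedDeriv_const_mul_field, iteratedDeriv_pow_mul_inv_pow_sub_mul l _ k hza,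
    mul_sum, mul_sum]
  have hsub : range (min k l + 1) ⊆ range (k + 1) := range_subset_range.2 (by omega)
  rw [← sum_subset hsub fun j hk hj => by
    rw [Nat.descFactorial_eq_zero_iff_lt.2 (by simp at hk hj; omega)]; simp]
  refine sum_congr rfl fun j hj => ?_
  have hjk : j ≤ k := by simp at hj; omega
  have hjl : j ≤ l := by simp at hj; omega
  have hcoeff : (k.choose j * l.descFactorial j * (l + 1).ascFactorial (k - j) : ℝ) =
      k ! * (k + l - j)! / ((k - j)! * (l - j)! * j !) := by
    rw [eq_div_iff (by positivity)]
    exact_mod_cast Nat.choose_mul_descFactorial_mul_ascFactorial hjk hjl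
  rw [hcoeff, show l + 1 + (k - j) = k + l - j + 1 by omega,
    show z - b / 2 * a = z - a * b / 2 by ring, show k + l = j + l + (k - j) by omega,
    pow_add, pow_add, div_pow]
  field_simp
end

section
/- Heat-kernel intertwining of the Hermite-type functions (Lemma 3.3 of the paper): Let p(x, y; t) = exp(−(x−y)²/(2t))/√(2πt) be the Gaussian heat kernel and γ(t) = √((1−t)/(1+t)). Then for every natural number k and all real t₁, t₂, y with −1 < t₁ < t₂ < 1: ∫_ℝ γ(t₁)^k · He_k(√2·x/√(1−t₁²)) · p(0, x; 1+t₁) · p(x, y; t₂−t₁) dx = γ(t₂)^k · He_k(√2·y/√(1−t₂²)) · p(0, y; 1+t₂). -/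
/-!
The product `p(0, x; s) · p(x, y; t)` factors as `p(0, y; s + t)` times the Gaussian density
`p(m, x; v)` with `m = y s / (s + t)` and `v = s t / (s + t)`, so the integral is a Gaussian
expectation of `x ↦ He_k(b x)`. Gaussian integration by parts, `E[(X - m) f(X)] = v E[f'(X)]`,
turns the three-term recurrence of the Hermite polynomials into a recurrence for these
expectations, whose solution is `r^k He_k(b m / r)` for any `r ≠ 0` with `r² = 1 - b² v`.
For the parameters of the statement, `r = γ(t₂)/γ(t₁)` and `b m / r = √2 y / √(1 - t₂²)`.
-/

open MeasureTheory Real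

/-- The Gaussian (Brownian) transition kernel `p(x, y; t) = exp(−(x−y)²/(2t))/√(2πt)`. -/
noncomputable def heatKernel (x y t : ℝ) : ℝ :=
  Real.exp (-(x - y) ^ 2 / (2 * t)) / Real.sqrt (2 * π * t)

open Polynomial ProbabilityTheory

lemma heatKernel_of_nonpos (x y : ℝ) {t : ℝ} (ht : t ≤ 0) : heatKernel x y t = 0 := by
  rw [heatKernel, Real.sqrt_eq_zero'.mpr (by nlinarith [pi_pos]), div_zero]

lemma heatKernel_eq_gaussianPDFReal (m x : ℝ) {v : ℝ} (hv : 0 ≤ v) :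
    heatKernel m x v = gaussianPDFReal m v.toNNReal x := by
  rw [heatKernel, gaussianPDFReal, Real.coe_toNNReal v hv, div_eq_inv_mul, ← neg_sub x m, neg_sq]

lemma integral_heatKernel (m : ℝ) {v : ℝ} (hv : 0 < v) : ∫ x, heatKernel m x v = 1 := by
  simp_rw [heatKernel_eq_gaussianPDFReal m _ hv.le]
  exact integral_gaussianPDFReal_eq_one m (by simpa using hv)

lemma hasDerivAt_heatKernel (m x v : ℝ) :
    HasDerivAt (fun x => heatKernel m x v) ((m - x) / v * heatKernel m x v) x := by
  have h : HasDerivAt (fun x => -(m - x) ^ 2 / (2 * v)) ((m - x) / v) x :=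
    ((((hasDerivAt_id x).const_sub m).pow 2).neg.div_const (2 * v)).congr_deriv (by
      simp only [Nat.cast_ofNat, id_eq, Nat.add_one_sub_one, pow_one]; ring)
  exact (h.exp.div_const (Real.sqrt (2 * π * v))).congr_deriv (by rw [heatKernel]; ring)

lemma heatKernel_mul_heatKernel (z x y : ℝ) {s t : ℝ} (hs : 0 < s) (ht : 0 < t) :
    heatKernel z x s * heatKernel x y t =
      heatKernel z y (s + t) * heatKernel ((z * t + y * s) / (s + t)) x (s * t / (s + t)) := by
  simp only [heatKernel]
  rw [div_mul_div_comm, div_mul_div_comm, ← Real.exp_add, ← Real.exp_add,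
    ← Real.sqrt_mul (by positivity), ← Real.sqrt_mul (by positivity)]
  congr 2
  · field_simp; ring
  · field_simp

lemma integrable_eval_mul_heatKernel (p : ℝ[X]) (m v : ℝ) :
    Integrable fun x => p.eval x * heatKernel m x v := by
  rcases le_or_gt v 0 with hv | hv
  · simp [heatKernel_of_nonpos _ _ hv]
  have hmonomial (n : ℕ) : Integrable fun x : ℝ => x ^ n * heatKernel 0 x v := by
    have h := (integrable_rpow_mul_exp_neg_mul_sq (b := 1 / (2 * v)) (by positivity)
      (s := n) (by linarith [n.cast_nonneg (α := ℝ)])).div_const (Real.sqrt (2 * π * v))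
    refine h.congr (.of_forall fun x => ?_)
    simp only [heatKernel, Real.rpow_natCast]
    ring_nf
  have hcentered (q : ℝ[X]) : Integrable fun x => q.eval x * heatKernel 0 x v := by
    induction q using Polynomial.induction_on' with
    | add p q hp hq => exact (hp.add hq).congr (.of_forall fun x => by simp [add_mul])
    | monomial n c => simpa [mul_assoc] using (hmonomial n).const_mul c
  refine ((hcentered (p.comp (X + C m))).comp_sub_right m).congr (.of_forall fun x => ?_)
  simp [heatKernel]

noncomputable def heatKernelIntegral (m v : ℝ) : ℝ[X] →ₗ[ℝ] ℝ where
  toFun p := ∫ x, p.eval x * heatKernel m x v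
  map_add' p q := by
    simp only [eval_add, add_mul]
    exact integral_add (integrable_eval_mul_heatKernel p m v) (integrable_eval_mul_heatKernel q m v)
  map_smul' c p := by
    simp only [eval_smul, smul_eq_mul, mul_assoc, integral_const_mul, RingHom.id_apply]

lemma heatKernelIntegral_apply (m v : ℝ) (p : ℝ[X]) :
    heatKernelIntegral m v p = ∫ x, p.eval x * heatKernel m x v :=
  rfl

lemma heatKernelIntegral_one (m : ℝ) {v : ℝ} (hv : 0 < v) : heatKernelIntegral m v 1 = 1 := by
  simp [heatKernelIntegral_apply, integral_heatKernel m hv]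

/-- Stein's identity: integrate the derivative of `x ↦ p(x) · p(m, x; v)` over `ℝ`. -/
lemma heatKernelIntegral_X_mul (m v : ℝ) (p : ℝ[X]) :
    heatKernelIntegral m v (X * p) =
      m * heatKernelIntegral m v p + v * heatKernelIntegral m v (derivative p) := by
  rcases le_or_gt v 0 with hv | hv
  · simp [heatKernelIntegral_apply, heatKernel_of_nonpos _ _ hv]
  have hderiv (x : ℝ) : HasDerivAt (fun x => p.eval x * heatKernel m x v)
      ((derivative p + v⁻¹ • (m • p - X * p)).eval x * heatKernel m x v) x :=
    ((p.hasDerivAt x).mul (hasDerivAt_heatKernel m x v)).congr_deriv (by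
      simp only [eval_add, eval_smul, eval_sub, smul_eq_mul, eval_mul, eval_X]; ring)
  have hzero := integral_eq_zero_of_hasDerivAt_of_integrable hderiv
    (integrable_eval_mul_heatKernel _ m v) (integrable_eval_mul_heatKernel p m v)
  rw [← heatKernelIntegral_apply, map_add, map_smul, map_sub, map_smul, smul_eq_mul,
    smul_eq_mul] at hzero
  field_simp at hzero
  linear_combination -hzero

lemma derivative_hermite_succ (n : ℕ) :
    derivative (hermite (n + 1)) = (n + 1 : ℤ[X]) * hermite n := by
  induction n with
  | zero => simp
  | succ n ih =>
    rw [hermite_succ (n + 1), derivative_sub, derivative_mul, derivative_X, ih, hermite_succ n]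
    simp only [derivative_mul, derivative_natCast, derivative_add, derivative_one]
    push_cast
    ring

lemma hermite_succ_succ (n : ℕ) :
    hermite (n + 2) = X * hermite (n + 1) - (n + 1 : ℤ[X]) * hermite n := by
  rw [hermite_succ (n + 1), derivative_hermite_succ]

noncomputable def scaledHermite (b : ℝ) (n : ℕ) : ℝ[X] :=
  ((hermite n).map (algebraMap ℤ ℝ)).comp (C b * X)

lemma eval_scaledHermite (b x : ℝ) (n : ℕ) :
    (scaledHermite b n).eval x = aeval (b * x) (hermite n) := by
  rw [scaledHermite, eval_comp, eval_map_algebraMap]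
  simp

lemma scaledHermite_succ_succ (b : ℝ) (n : ℕ) :
    scaledHermite b (n + 2) =
      b • (X * scaledHermite b (n + 1)) - ((n : ℝ) + 1) • scaledHermite b n := by
  simp only [scaledHermite, hermite_succ_succ n, Polynomial.map_sub, Polynomial.map_mul,
    Polynomial.map_add, Polynomial.map_natCast, Polynomial.map_one, map_X, sub_comp, mul_comp,
    add_comp, natCast_comp, one_comp, X_comp, smul_eq_C_mul, map_add, map_natCast, map_one]
  ring

lemma derivative_scaledHermite_succ (b : ℝ) (n : ℕ) :
    derivative (scaledHermite b (n + 1)) = (b * (n + 1)) • scaledHermite b n := by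
  rw [scaledHermite, derivative_comp, derivative_map, derivative_hermite_succ]
  simp only [scaledHermite, derivative_C_mul_X, Polynomial.map_mul, Polynomial.map_add,
    Polynomial.map_natCast, Polynomial.map_one, mul_comp, add_comp, natCast_comp, one_comp,
    smul_eq_C_mul, map_mul, map_add, map_natCast, map_one]
  ring

theorem heatKernelIntegral_scaledHermite (n : ℕ) {b m v r : ℝ} (hv : 0 < v) (hr : r ≠ 0)
    (hr2 : r ^ 2 = 1 - b ^ 2 * v) :
    heatKernelIntegral m v (scaledHermite b n) = r ^ n * aeval (b * m / r) (hermite n) := by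
  set L := heatKernelIntegral m v
  set s := b * m / r
  have hrs : r * s = b * m := mul_div_cancel₀ _ hr
  -- Both sides satisfy `u₀ = 1`, `u₁ = b m`, `u_{n+2} = b m u_{n+1} - (n + 1) (1 - b² v) u_n`.
  suffices ∀ n, L (scaledHermite b n) = r ^ n * aeval s (hermite n) ∧
      L (scaledHermite b (n + 1)) = r ^ (n + 1) * aeval s (hermite (n + 1)) from (this n).1
  intro n
  induction n with
  | zero =>
    have h1 : scaledHermite b 1 = b • (X * 1) := by simp [scaledHermite, smul_eq_C_mul]
    have h0 : scaledHermite b 0 = 1 := by simp [scaledHermite]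
    rw [h1, map_smul, heatKernelIntegral_X_mul, h0, heatKernelIntegral_one m hv]
    simp [hrs]
  | succ n ih =>
    refine ⟨ih.2, ?_⟩
    rw [scaledHermite_succ_succ, map_sub, map_smul, map_smul, heatKernelIntegral_X_mul,
      derivative_scaledHermite_succ, map_smul, ih.1, ih.2, hermite_succ_succ]
    simp only [map_sub, map_mul, aeval_X, map_add, map_natCast, map_one, smul_eq_mul]
    linear_combination (-(r ^ (n + 1)) * aeval s (hermite (n + 1))) * hrs +
      ((n + 1) * r ^ n * aeval s (hermite n)) * hr2

theorem integral_aeval_hermite_mul_heatKernel_mul_heatKernel (k : ℕ) (z y : ℝ) {b r s t : ℝ}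
    (hs : 0 < s) (ht : 0 < t) (hr : r ≠ 0) (hr2 : r ^ 2 = 1 - b ^ 2 * (s * t / (s + t))) :
    ∫ x, aeval (b * x) (hermite k) * heatKernel z x s * heatKernel x y t =
      heatKernel z y (s + t) *
        (r ^ k * aeval (b * ((z * t + y * s) / (s + t)) / r) (hermite k)) := by
  simp_rw [mul_assoc, heatKernel_mul_heatKernel z _ y hs ht, ← eval_scaledHermite]
  simp_rw [mul_left_comm _ (heatKernel z y (s + t)), integral_const_mul]
  rw [← heatKernelIntegral_apply, heatKernelIntegral_scaledHermite k (by positivity) hr hr2]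

lemma sqrt_one_sub_sq_eq {t : ℝ} (ht : -1 < t) :
    √(1 - t ^ 2) = (1 + t) * √((1 - t) / (1 + t)) := by
  have h : 0 < 1 + t := by linarith
  calc √(1 - t ^ 2) = √((1 + t) ^ 2 * ((1 - t) / (1 + t))) := by
        congr 1
        field_simp
        ring
    _ = (1 + t) * √((1 - t) / (1 + t)) := by rw [Real.sqrt_mul (sq_nonneg _), Real.sqrt_sq h.le]

/-- Heat-kernel intertwining of the Hermite-type functions (Lemma 3.3): with
`γ(t) = √((1−t)/(1+t))` and `He_k` the probabilists' Hermite polynomial, for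
`−1 < t₁ < t₂ < 1` and all real `y`,
`∫ γ(t₁)^k · He_k(√2·x/√(1−t₁²)) · p(0,x;1+t₁) · p(x,y;t₂−t₁) dx
  = γ(t₂)^k · He_k(√2·y/√(1−t₂²)) · p(0,y;1+t₂)`. -/
theorem hermite_heat_kernel_intertwining (k : ℕ) (t₁ t₂ y : ℝ)
    (h₁ : -1 < t₁) (h₁₂ : t₁ < t₂) (h₂ : t₂ < 1) :
    (∫ x : ℝ,
        Real.sqrt ((1 - t₁) / (1 + t₁)) ^ k *
          (Polynomial.aeval (Real.sqrt 2 * x / Real.sqrt (1 - t₁ ^ 2))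
            (Polynomial.hermite k)) *
          heatKernel 0 x (1 + t₁) * heatKernel x y (t₂ - t₁)) =
      Real.sqrt ((1 - t₂) / (1 + t₂)) ^ k *
        (Polynomial.aeval (Real.sqrt 2 * y / Real.sqrt (1 - t₂ ^ 2))
          (Polynomial.hermite k)) *
        heatKernel 0 y (1 + t₂) := by
  have hs : 0 < 1 + t₁ := by linarith
  have ht : 0 < t₂ - t₁ := by linarith
  have h1t₁ : 1 - t₁ ≠ 0 := by linarith
  have h1t₂ : 1 + t₂ ≠ 0 := by linarith
  have hsum : 1 + t₁ + (t₂ - t₁) = 1 + t₂ := by ring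
  rw [sqrt_one_sub_sq_eq h₁, sqrt_one_sub_sq_eq (h₁.trans h₁₂)]
  set γ₁ := √((1 - t₁) / (1 + t₁))
  set γ₂ := √((1 - t₂) / (1 + t₂))
  have hγ₁ : 0 < γ₁ := Real.sqrt_pos.mpr (div_pos (by linarith) hs)
  have hγ₂ : 0 < γ₂ := Real.sqrt_pos.mpr (div_pos (by linarith) (by linarith))
  have hγ₁sq : γ₁ ^ 2 = (1 - t₁) / (1 + t₁) := Real.sq_sqrt (div_pos (by linarith) hs).le
  have hγ₂sq : γ₂ ^ 2 = (1 - t₂) / (1 + t₂) := Real.sq_sqrt (div_pos (by linarith) (by linarith)).le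
  set b := √2 / ((1 + t₁) * γ₁)
  have hr2 : (γ₂ / γ₁) ^ 2 = 1 - b ^ 2 * ((1 + t₁) * (t₂ - t₁) / (1 + t₁ + (t₂ - t₁))) := by
    simp only [b, hsum, div_pow, mul_pow, hγ₁sq, hγ₂sq, Real.sq_sqrt zero_le_two]
    field_simp
    ring
  simp_rw [mul_div_right_comm √2, mul_assoc, ← mul_assoc (aeval _ _)]
  rw [integral_const_mul, integral_aeval_hermite_mul_heatKernel_mul_heatKernel k 0 y hs ht
    (div_pos hγ₂ hγ₁).ne' hr2, hsum, div_pow, zero_mul, zero_add]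
  have harg : b * (y * (1 + t₁) / (1 + t₂)) / (γ₂ / γ₁) = √2 * y / ((1 + t₂) * γ₂) := by
    simp only [b]
    field_simp
  rw [harg]
  field_simp
end

section
/- Existence and uniqueness of the cusp parameters (part of Theorem 1.4 of the paper): For all real numbers α < β, there exists exactly one pair (x, σ) ∈ ℝ² with 3/2 < x < 2, −1/2 < σ < 0, 4·σ⁶·x⁴ − 2x + 3 = 0, and β − α = 4·σ⁴·x³/(2 − x). Likewise, there exists exactly one pair (x, σ) ∈ ℝ² with 3/2 < x < 2, 0 < σ < 1/2 satisfying the same two equations. -/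
/-!
With `c = β - α > 0` and `s = σ²`, the two equations read `4 s³ x⁴ = 2x - 3` and
`c (2 - x) = 4 s² x³`. Their ratio gives `s c x (2 - x) = 2x - 3`, and substituting back leaves the
cubic condition `(c (2 - x))³ = 4x (2x - 3)²` on `x` alone. Its left side decreases and its right
side increases on `[3/2, 2]`, with opposite order at the endpoints, so there is exactly one root
`x`; then `s > 0` is determined, and `σ` is determined by its sign. The bound `|σ| < 1/2` holds on
the whole curve away from `x = 2`.
-/

open Set

def cuspEliminant (c x : ℝ) : ℝ := (c * (2 - x)) ^ 3 - 4 * x * (2 * x - 3) ^ 2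

lemma strictAntiOn_cuspEliminant {c : ℝ} (hc : 0 ≤ c) :
    StrictAntiOn (cuspEliminant c) (Icc (3 / 2) 2) := by
  rintro x ⟨hx, -⟩ y ⟨-, hy⟩ hxy
  have hleft : (c * (2 - y)) ^ 3 ≤ (c * (2 - x)) ^ 3 := by
    have : 0 ≤ c * (2 - y) := mul_nonneg hc (by linarith)
    gcongr
  have hright : 4 * x * (2 * x - 3) ^ 2 < 4 * y * (2 * y - 3) ^ 2 :=
    calc 4 * x * (2 * x - 3) ^ 2 ≤ 4 * x * (2 * y - 3) ^ 2 := by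
          have : 0 ≤ 2 * x - 3 := by linarith
          gcongr
      _ < 4 * y * (2 * y - 3) ^ 2 := by
          have : 0 < (2 * y - 3) ^ 2 := by nlinarith
          gcongr
  simp only [cuspEliminant]
  linarith

lemma existsUnique_cuspEliminant_eq_zero {c : ℝ} (hc : 0 < c) :
    ∃! x, x ∈ Ioo (3 / 2 : ℝ) 2 ∧ cuspEliminant c x = 0 := by
  have hcont : ContinuousOn (cuspEliminant c) (Icc (3 / 2) 2) := by
    unfold cuspEliminant
    fun_prop
  have hsign : (0 : ℝ) ∈ Ioo (cuspEliminant c 2) (cuspEliminant c (3 / 2)) := by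
    constructor <;> norm_num [cuspEliminant]; positivity
  obtain ⟨x, hx, hroot⟩ := intermediate_value_Ioo' (by norm_num) hcont hsign
  refine ⟨x, ⟨hx, hroot⟩, fun y ⟨hy, hroot'⟩ => ?_⟩
  exact (strictAntiOn_cuspEliminant hc.le).injOn (Ioo_subset_Icc_self hy)
    (Ioo_subset_Icc_self hx) (hroot'.trans hroot.symm)

lemma cusp_eqns_iff {c x σ : ℝ} (hx₁ : x ≠ 3 / 2) (hx₂ : x ≠ 2) :
    (4 * σ ^ 6 * x ^ 4 - 2 * x + 3 = 0 ∧ c = 4 * σ ^ 4 * x ^ 3 / (2 - x)) ↔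
      cuspEliminant c x = 0 ∧ σ ^ 2 * (c * x * (2 - x)) = 2 * x - 3 := by
  have h2x : 2 - x ≠ 0 := sub_ne_zero.2 hx₂.symm
  rw [eq_div_iff h2x]
  unfold cuspEliminant
  constructor
  · rintro ⟨hcurve, hc⟩
    constructor
    · linear_combination
        ((c * (2 - x)) ^ 2 + c * (2 - x) * (4 * σ ^ 4 * x ^ 3) + (4 * σ ^ 4 * x ^ 3) ^ 2) * hc
          + 4 * x * (4 * σ ^ 6 * x ^ 4 + 2 * x - 3) * hcurve
    · linear_combination σ ^ 2 * x * hc + hcurve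
  · rintro ⟨hroot, hs⟩
    have hu : c * (2 - x) ≠ 0 := by
      rintro hu
      have : 2 * x - 3 = 0 := by rw [← hs]; linear_combination σ ^ 2 * x * hu
      exact hx₁ (by linarith)
    -- with `u = c (2 - x)`: `u³ = 4x (σ² x u)² = 4σ⁴x³ u²`
    have hu' : c * (2 - x) = 4 * σ ^ 4 * x ^ 3 := by
      apply mul_right_cancel₀ (pow_ne_zero 2 hu)
      linear_combination hroot - 4 * x * (2 * x - 3 + σ ^ 2 * x * (c * (2 - x))) * hs
    refine ⟨?_, hu'⟩
    linear_combination hs - σ ^ 2 * x * hu'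

lemma abs_lt_half_of_cusp_curve {x σ : ℝ} (hx : x ≠ 2)
    (hcurve : 4 * σ ^ 6 * x ^ 4 - 2 * x + 3 = 0) : |σ| < 1 / 2 := by
  have hx0 : x ≠ 0 := by rintro rfl; norm_num at hcurve
  have hx4 : 0 < x ^ 4 := by positivity
  -- `x⁴ - 16 (2x - 3) = (x - 2)² (x² + 4x + 12)`
  have hgap : 16 * (2 * x - 3) < x ^ 4 := by
    have : 0 < (x - 2) ^ 2 * ((x + 2) ^ 2 + 8) := by
      have := sub_ne_zero.2 hx
      positivity
    linarith
  have h6 : |2 * σ| ^ 6 < 1 := by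
    rw [Even.pow_abs (by decide)]
    nlinarith
  have := (pow_lt_one_iff_of_nonneg (abs_nonneg _) (by norm_num)).1 h6
  rw [abs_mul, abs_two] at this
  linarith

theorem existsUnique_closing_cusp {c : ℝ} (hc : 0 < c) :
    ∃! p : ℝ × ℝ, 3 / 2 < p.1 ∧ p.1 < 2 ∧ 0 < p.2 ∧ p.2 < 1 / 2 ∧
      4 * p.2 ^ 6 * p.1 ^ 4 - 2 * p.1 + 3 = 0 ∧ c = 4 * p.2 ^ 4 * p.1 ^ 3 / (2 - p.1) := by
  obtain ⟨x, ⟨⟨hx₁, hx₂⟩, hroot⟩, hx_unique⟩ := existsUnique_cuspEliminant_eq_zero hc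
  have hden : 0 < c * x * (2 - x) := by
    have : 0 < 2 - x := by linarith
    have : 0 < x := by linarith
    positivity
  set s := (2 * x - 3) / (c * x * (2 - x))
  have hs : 0 < s := div_pos (by linarith) hden
  have hs_iff (σ : ℝ) : σ ^ 2 * (c * x * (2 - x)) = 2 * x - 3 ↔ σ ^ 2 = s :=
    (eq_div_iff hden.ne').symm
  refine ⟨(x, √s), ?_, ?_⟩
  · have heqns := (cusp_eqns_iff hx₁.ne' hx₂.ne).2 ⟨hroot, (hs_iff _).2 (Real.sq_sqrt hs.le)⟩
    exact ⟨hx₁, hx₂, Real.sqrt_pos.2 hs,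
      (abs_lt.1 (abs_lt_half_of_cusp_curve hx₂.ne heqns.1)).2, heqns⟩
  · rintro ⟨y, σ⟩ ⟨hy₁, hy₂, hσ, -, heqns⟩
    obtain ⟨hroot', hσ_sq⟩ := (cusp_eqns_iff hy₁.ne' hy₂.ne).1 heqns
    obtain rfl : y = x := hx_unique y ⟨⟨hy₁, hy₂⟩, hroot'⟩
    rw [hs_iff] at hσ_sq
    rw [← hσ_sq, Real.sqrt_sq hσ.le]

theorem existsUnique_opening_cusp {c : ℝ} (hc : 0 < c) :
    ∃! p : ℝ × ℝ, 3 / 2 < p.1 ∧ p.1 < 2 ∧ -(1 / 2) < p.2 ∧ p.2 < 0 ∧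
      4 * p.2 ^ 6 * p.1 ^ 4 - 2 * p.1 + 3 = 0 ∧ c = 4 * p.2 ^ 4 * p.1 ^ 3 / (2 - p.1) := by
  refine ((Equiv.refl ℝ).prodCongr (Equiv.neg ℝ)).existsUnique_congr (fun p => ?_) |>.2
    (existsUnique_closing_cusp hc)
  simp only [Equiv.prodCongr_apply, Equiv.coe_refl, Equiv.neg_apply, Prod.map_fst, Prod.map_snd,
    id, Even.neg_pow (by decide : Even 6), Even.neg_pow (by decide : Even 4), neg_pos, neg_lt]
  tauto

/-- Existence and uniqueness of the cusp parameters (part of Theorem 1.4): for all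
reals `α < β`, there is exactly one pair `(x, σ)` with `3/2 < x < 2`, `−1/2 < σ < 0`,
`4σ⁶x⁴ − 2x + 3 = 0` and `β − α = 4σ⁴x³/(2 − x)` (opening cusp), and exactly one
pair with `3/2 < x < 2`, `0 < σ < 1/2` satisfying the same equations (closing cusp). -/
theorem cusp_parameters_exist_unique (α β : ℝ) (hαβ : α < β) :
    (∃! p : ℝ × ℝ,
        3 / 2 < p.1 ∧ p.1 < 2 ∧ -(1 / 2) < p.2 ∧ p.2 < 0 ∧
          4 * p.2 ^ 6 * p.1 ^ 4 - 2 * p.1 + 3 = 0 ∧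
          β - α = 4 * p.2 ^ 4 * p.1 ^ 3 / (2 - p.1)) ∧
      ∃! p : ℝ × ℝ,
        3 / 2 < p.1 ∧ p.1 < 2 ∧ 0 < p.2 ∧ p.2 < 1 / 2 ∧
          4 * p.2 ^ 6 * p.1 ^ 4 - 2 * p.1 + 3 = 0 ∧
          β - α = 4 * p.2 ^ 4 * p.1 ^ 3 / (2 - p.1) :=
  ⟨existsUnique_opening_cusp (sub_pos.2 hαβ), existsUnique_closing_cusp (sub_pos.2 hαβ)⟩
end

section
/- Monotone bijectivity of the cusp-gap function: The function g(x) = x^{1/3}·(2x − 3)^{2/3}/(2 − x) (real powers via rpow) is strictly increasing on the open interval (3/2, 2), and its image g '' (3/2, 2) equals (0, ∞). -/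
open Real Set

/-- Monotone bijectivity of the cusp-gap function: the function
`g(x) = x^{1/3}·(2x − 3)^{2/3}/(2 − x)` (real powers) is strictly increasing on
`(3/2, 2)` and its image of `(3/2, 2)` is `(0, ∞)`. -/
theorem cusp_gap_function_bijective :
    StrictMonoOn (fun x : ℝ => x ^ ((1 : ℝ) / 3) * (2 * x - 3) ^ ((2 : ℝ) / 3) / (2 - x))
        (Set.Ioo (3 / 2) 2) ∧
      (fun x : ℝ => x ^ ((1 : ℝ) / 3) * (2 * x - 3) ^ ((2 : ℝ) / 3) / (2 - x)) ''
          Set.Ioo (3 / 2) 2 =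
        Set.Ioi 0 := by
  have hcont : ContinuousOn
      (fun x : ℝ => x ^ ((1 : ℝ) / 3) * (2 * x - 3) ^ ((2 : ℝ) / 3) / (2 - x))
      (Set.Ioo (3/2 : ℝ) 2) := by
    apply ContinuousOn.div
    · apply ContinuousOn.mul
      · exact continuousOn_id.rpow_const (fun x hx => Or.inl (by
          have h := hx.1; intro h0; have h0' : x = 0 := h0; rw [h0'] at h; norm_num at h))
      · apply ContinuousOn.rpow_const (by fun_prop)
        intro x hx
        exact Or.inl (by obtain ⟨h1, h2⟩ := hx; intro h; have h' : 2*x-3 = 0 := h; linarith)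
    · fun_prop
    · intro x hx; obtain ⟨h1, h2⟩ := hx; intro h; linarith [sub_eq_zero.mp h]
  constructor
  · intro a ha b hb hab
    obtain ⟨ha1, ha2⟩ := ha; obtain ⟨hb1, hb2⟩ := hb
    have h1 : (0:ℝ) < a := by linarith
    have h2 : (0:ℝ) < b := by linarith
    have h3 : (0:ℝ) < 2*a-3 := by linarith
    have h4 : (0:ℝ) < 2*b-3 := by linarith
    show a ^ ((1:ℝ)/3) * (2*a-3) ^ ((2:ℝ)/3) / (2-a)
        < b ^ ((1:ℝ)/3) * (2*b-3) ^ ((2:ℝ)/3) / (2-b)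
    gcongr; all_goals first | positivity | linarith
  · apply Set.Subset.antisymm
    · rintro _ ⟨x, ⟨hx1, hx2⟩, rfl⟩
      have h1 : (0:ℝ) < x := by linarith
      have h3 : (0:ℝ) < 2*x-3 := by linarith
      have h5 : (0:ℝ) < 2-x := by linarith
      show (0:ℝ) < x ^ ((1:ℝ)/3) * (2*x-3) ^ ((2:ℝ)/3) / (2-x)
      positivity
    · rintro y hy
      rw [Set.mem_Ioi] at hy
      -- small endpoint
      obtain ⟨t, hts⟩ : ∃ t : ℝ, t = min (y/16) (1/2) := ⟨_, rfl⟩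
      have ht : 0 < t := by rw [hts]; positivity
      have ht1 : t ≤ 1/2 := hts ▸ min_le_right _ _
      have hty : t ≤ y/16 := hts ▸ min_le_left _ _
      obtain ⟨a, has⟩ : ∃ a : ℝ, a = 3/2 + t ^ ((3:ℝ)/2) / 2 := ⟨_, rfl⟩
      have htp : (0:ℝ) < t ^ ((3:ℝ)/2) := rpow_pos_of_pos ht _
      have htle : t ^ ((3:ℝ)/2) ≤ t := by
        calc t ^ ((3:ℝ)/2) ≤ t ^ (1:ℝ) :=
              rpow_le_rpow_of_exponent_ge ht (by linarith) (by norm_num)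
          _ = t := rpow_one t
      have ha1 : 3/2 < a := by rw [has]; linarith
      have ha2 : a ≤ 7/4 := by rw [has]; linarith
      -- big endpoint
      obtain ⟨d, hds⟩ : ∃ d : ℝ, d = min (1/(2*y)) (1/4) := ⟨_, rfl⟩
      have hd : 0 < d := by rw [hds]; positivity
      have hd1 : d ≤ 1/4 := hds ▸ min_le_right _ _
      have hdy : d ≤ 1/(2*y) := hds ▸ min_le_left _ _
      obtain ⟨b, hbs⟩ : ∃ b : ℝ, b = 2 - d := ⟨_, rfl⟩
      have hb1 : (7:ℝ)/4 ≤ b := by rw [hbs]; linarith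
      have hb2 : b < 2 := by rw [hbs]; linarith
      have hab : a ≤ b := le_trans ha2 hb1
      have hsub : Set.Icc a b ⊆ Set.Ioo (3/2 : ℝ) 2 := fun x hx =>
        ⟨lt_of_lt_of_le ha1 hx.1, lt_of_le_of_lt hx.2 hb2⟩
      have hga : a ^ ((1:ℝ)/3) * (2*a-3) ^ ((2:ℝ)/3) / (2-a) ≤ y := by
        have h2a : 2 * a - 3 = t ^ ((3:ℝ)/2) := by rw [has]; ring
        have hpow : (t ^ ((3:ℝ)/2)) ^ ((2:ℝ)/3) = t := by
          rw [← Real.rpow_mul ht.le, show (3:ℝ)/2 * (2/3) = 1 by norm_num, rpow_one]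
        have haa : a ^ ((1:ℝ)/3) ≤ 2 := by
          calc a ^ ((1:ℝ)/3) ≤ a ^ (1:ℝ) :=
                rpow_le_rpow_of_exponent_le (by linarith) (by norm_num)
            _ = a := rpow_one a
            _ ≤ 2 := by linarith
        have hapos : (0:ℝ) < a ^ ((1:ℝ)/3) := rpow_pos_of_pos (by linarith) _
        have h2ap : (0:ℝ) < 2 - a := by linarith
        rw [h2a, hpow, div_le_iff₀ h2ap]
        nlinarith [mul_le_mul_of_nonneg_right haa ht.le,
          mul_le_mul_of_nonneg_left h2ap.le hy.le]
      have hgb : y ≤ b ^ ((1:ℝ)/3) * (2*b-3) ^ ((2:ℝ)/3) / (2-b) := by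
        have hb0 : (1:ℝ) ≤ b := by linarith
        have hbb : (1:ℝ) ≤ b ^ ((1:ℝ)/3) := by
          calc (1:ℝ) = (1:ℝ) ^ ((1:ℝ)/3) := (one_rpow _).symm
            _ ≤ b ^ ((1:ℝ)/3) := rpow_le_rpow (by norm_num) hb0 (by norm_num)
        have hbc : (1:ℝ)/2 ≤ (2*b - 3) ^ ((2:ℝ)/3) := by
          calc (1:ℝ)/2 = ((1:ℝ)/2) ^ (1:ℝ) := (rpow_one _).symm
            _ ≤ ((1:ℝ)/2) ^ ((2:ℝ)/3) :=
                rpow_le_rpow_of_exponent_ge (by norm_num) (by norm_num) (by norm_num)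
            _ ≤ (2*b - 3) ^ ((2:ℝ)/3) := rpow_le_rpow (by norm_num) (by linarith) (by norm_num)
        have h2bp : (0:ℝ) < 2 - b := by linarith
        have hyd : y * (2 - b) ≤ 1/2 := by
          have h2b : 2 - b = d := by rw [hbs]; ring
          rw [h2b]
          calc y * d ≤ y * (1/(2*y)) := mul_le_mul_of_nonneg_left hdy hy.le
            _ = 1/2 := by field_simp
        rw [le_div_iff₀ h2bp]
        nlinarith [mul_le_mul hbb hbc (by norm_num : (0:ℝ) ≤ 1/2)
          (by positivity : (0:ℝ) ≤ b ^ ((1:ℝ)/3))]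
      have : y ∈ (fun x : ℝ => x ^ ((1:ℝ)/3) * (2*x-3) ^ ((2:ℝ)/3) / (2-x)) '' Set.Icc a b :=
        intermediate_value_Icc hab (hcont.mono hsub) ⟨hga, hgb⟩
      obtain ⟨x, hx, hxy⟩ := this
      exact ⟨x, hsub hx, hxy⟩
end

section
/- Triple critical point factorization on the elliptic curve: Let x, σ be real numbers with 4·σ⁶·x⁴ = 2x − 3 and x ≠ 2. Define α' = 2σ(1 − x³σ³)/(2 − x), β' = 2σ(1 + x³σ³)/(2 − x), X = σ²(1 − 2x), and w₁ = σ(3x − 2)/(2 − x). Then for every real w: (w − α')·(w − β')·(w² − X) + (α' − β') = (w − σ)³·(w − w₁). -/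
/-- Triple critical point factorization on the elliptic curve: if `4σ⁶x⁴ = 2x − 3` and
`x ≠ 2`, then with `α' = 2σ(1 − x³σ³)/(2 − x)`, `β' = 2σ(1 + x³σ³)/(2 − x)`,
`X = σ²(1 − 2x)`, `w₁ = σ(3x − 2)/(2 − x)`, one has, for every real `w`,
`(w − α')(w − β')(w² − X) + (α' − β') = (w − σ)³(w − w₁)`. -/
theorem triple_critical_point_factorization (x σ : ℝ)
    (hcurve : 4 * σ ^ 6 * x ^ 4 = 2 * x - 3) (hx : x ≠ 2) :
    ∀ w : ℝ,
      (w - 2 * σ * (1 - x ^ 3 * σ ^ 3) / (2 - x)) *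
            (w - 2 * σ * (1 + x ^ 3 * σ ^ 3) / (2 - x)) * (w ^ 2 - σ ^ 2 * (1 - 2 * x)) +
          (2 * σ * (1 - x ^ 3 * σ ^ 3) / (2 - x) - 2 * σ * (1 + x ^ 3 * σ ^ 3) / (2 - x)) =
        (w - σ) ^ 3 * (w - σ * (3 * x - 2) / (2 - x)) := by
  intro w
  have hx' : (2 : ℝ) - x ≠ 0 := sub_ne_zero.mpr hx.symm
  field_simp
  -- The curve enters only through the term `4σ⁸x⁶` of `α'β' (2 - x)²`, which multiplies `w² - X`
  -- and which the curve rewrites as `σ²x²(2x - 3)`; all other coefficients match identically.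
  linear_combination -σ ^ 2 * x ^ 2 * (w ^ 2 - σ ^ 2 * (1 - 2 * x)) * hcurve
end

section
/- Fourth-derivative coefficient at the triple critical point: Let x, σ be real numbers with 4·σ⁶·x⁴ = 2x − 3, x ≠ 0, x ≠ 2, and σ ≠ 0. Define α' = 2σ(1 − x³σ³)/(2 − x) and β' = 2σ(1 + x³σ³)/(2 − x). Then σ ≠ α', σ ≠ β', and (1/4)·( (σ − α')^{−4} − (σ − β')^{−4} ) = (x − 1)/(2·x²·σ). -/
/-!
Put `t = 2x²σ³`, so that the curve relation reads `t² = 2x − 3`, i.e. `(t − 1)(t + 1) = −2(2 − x)`;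
in particular `t ≠ ±1`. This turns the two distances into `σ − α' = −2σx/(t + 1)` and
`σ − β' = 2σx/(t − 1)`, whence
`(σ − α')⁻⁴ − (σ − β')⁻⁴ = ((t + 1)⁴ − (t − 1)⁴)/(16σ⁴x⁴) = t(t² + 1)/(2σ⁴x⁴)`,
and `t² + 1 = 2(x − 1)` gives the claim.
-/

variable {K : Type*} [Field K]

lemma sq_eq_of_curve {x σ : K} (hcurve : 4 * σ ^ 6 * x ^ 4 = 2 * x - 3) :
    (2 * x ^ 2 * σ ^ 3) ^ 2 = 2 * x - 3 := by
  linear_combination hcurve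

variable [CharZero K]

lemma add_one_ne_zero_of_sq_eq {x t : K} (ht : t ^ 2 = 2 * x - 3) (hx2 : x ≠ 2) :
    t + 1 ≠ 0 := fun h => hx2 (by linear_combination (t - 1) * h / 2 - ht / 2)

lemma sub_one_ne_zero_of_sq_eq {x t : K} (ht : t ^ 2 = 2 * x - 3) (hx2 : x ≠ 2) :
    t - 1 ≠ 0 := fun h => hx2 (by linear_combination (t + 1) * h / 2 - ht / 2)

lemma sub_alpha_eq {x σ : K} (hcurve : 4 * σ ^ 6 * x ^ 4 = 2 * x - 3) (hx2 : x ≠ 2) :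
    σ - 2 * σ * (1 - x ^ 3 * σ ^ 3) / (2 - x) = -2 * σ * x / (2 * x ^ 2 * σ ^ 3 + 1) := by
  have h2x : (2 : K) - x ≠ 0 := sub_ne_zero.mpr hx2.symm
  have ht := sq_eq_of_curve hcurve
  set t := 2 * x ^ 2 * σ ^ 3 with ht_def
  have htp := add_one_ne_zero_of_sq_eq ht hx2
  field_simp
  linear_combination σ * x * ht + σ * x * (t + 1) * ht_def

lemma sub_beta_eq {x σ : K} (hcurve : 4 * σ ^ 6 * x ^ 4 = 2 * x - 3) (hx2 : x ≠ 2) :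
    σ - 2 * σ * (1 + x ^ 3 * σ ^ 3) / (2 - x) = 2 * σ * x / (2 * x ^ 2 * σ ^ 3 - 1) := by
  have h2x : (2 : K) - x ≠ 0 := sub_ne_zero.mpr hx2.symm
  have ht := sq_eq_of_curve hcurve
  set t := 2 * x ^ 2 * σ ^ 3 with ht_def
  have htm := sub_one_ne_zero_of_sq_eq ht hx2
  field_simp
  linear_combination -σ * x * ht - σ * x * (t - 1) * ht_def

lemma inv_pow_four_sub_inv_pow_four {x σ : K} (hcurve : 4 * σ ^ 6 * x ^ 4 = 2 * x - 3)
    (hx0 : x ≠ 0) (hσ : σ ≠ 0) :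
    1 / 4 * (((-2 * σ * x / (2 * x ^ 2 * σ ^ 3 + 1)) ^ 4)⁻¹ -
        ((2 * σ * x / (2 * x ^ 2 * σ ^ 3 - 1)) ^ 4)⁻¹) = (x - 1) / (2 * x ^ 2 * σ) := by
  have ht := sq_eq_of_curve hcurve
  set t := 2 * x ^ 2 * σ ^ 3 with ht_def
  field_simp
  linear_combination 8 * t * ht - 16 * (x - 1) * ht_def

/-- Fourth-derivative coefficient at the triple critical point: if `4σ⁶x⁴ = 2x − 3`,
`x ≠ 0`, `x ≠ 2`, `σ ≠ 0`, then with `α' = 2σ(1 − x³σ³)/(2 − x)` and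
`β' = 2σ(1 + x³σ³)/(2 − x)` one has `σ ≠ α'`, `σ ≠ β'`, and
`(1/4)·((σ − α')⁻⁴ − (σ − β')⁻⁴) = (x − 1)/(2x²σ)`. -/
theorem fourth_derivative_coefficient (x σ : ℝ)
    (hcurve : 4 * σ ^ 6 * x ^ 4 = 2 * x - 3) (hx0 : x ≠ 0) (hx2 : x ≠ 2) (hσ : σ ≠ 0) :
    σ ≠ 2 * σ * (1 - x ^ 3 * σ ^ 3) / (2 - x) ∧
      σ ≠ 2 * σ * (1 + x ^ 3 * σ ^ 3) / (2 - x) ∧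
      (1 / 4) *
          (((σ - 2 * σ * (1 - x ^ 3 * σ ^ 3) / (2 - x)) ^ 4)⁻¹ -
            ((σ - 2 * σ * (1 + x ^ 3 * σ ^ 3) / (2 - x)) ^ 4)⁻¹) =
        (x - 1) / (2 * x ^ 2 * σ) := by
  have ht := sq_eq_of_curve hcurve
  have hσx : 2 * σ * x ≠ 0 := by positivity
  refine ⟨sub_ne_zero.mp ?_, sub_ne_zero.mp ?_, ?_⟩
  · rw [sub_alpha_eq hcurve hx2, neg_mul, neg_mul, neg_div]
    exact neg_ne_zero.mpr (div_ne_zero hσx (add_one_ne_zero_of_sq_eq ht hx2))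
  · rw [sub_beta_eq hcurve hx2]
    exact div_ne_zero hσx (sub_one_ne_zero_of_sq_eq ht hx2)
  · rw [sub_alpha_eq hcurve hx2, sub_beta_eq hcurve hx2]
    exact inv_pow_four_sub_inv_pow_four hcurve hx0 hσ
end

section
/- Position of the critical point relative to the poles: Let x be real with 3/2 < x < 2 and let σ be real with 4·σ⁶·x⁴ = 2x − 3. Define α' = 2σ(1 − x³σ³)/(2 − x) and β' = 2σ(1 + x³σ³)/(2 − x). Then α' < β'; moreover, if σ < 0 then β' < σ, and if σ > 0 then σ < α'. -/
/-- Position of the critical point relative to the poles: if `3/2 < x < 2` and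
`4σ⁶x⁴ = 2x − 3`, then with `α' = 2σ(1 − x³σ³)/(2 − x)` and
`β' = 2σ(1 + x³σ³)/(2 − x)` one has `α' < β'`; moreover `β' < σ` when `σ < 0`
and `σ < α'` when `σ > 0`. -/
theorem critical_point_position (x σ : ℝ) (hx1 : 3 / 2 < x) (hx2 : x < 2)
    (hcurve : 4 * σ ^ 6 * x ^ 4 = 2 * x - 3) :
    2 * σ * (1 - x ^ 3 * σ ^ 3) / (2 - x) < 2 * σ * (1 + x ^ 3 * σ ^ 3) / (2 - x) ∧
      (σ < 0 → 2 * σ * (1 + x ^ 3 * σ ^ 3) / (2 - x) < σ) ∧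
      (0 < σ → σ < 2 * σ * (1 - x ^ 3 * σ ^ 3) / (2 - x)) := by
  have h2x : (0:ℝ) < 2 - x := by linarith
  have hσ : σ ≠ 0 := by
    intro h
    rw [h] at hcurve
    norm_num at hcurve
    linarith
  have hσ4 : 0 < σ ^ 4 := by positivity
  have key : (2 * x ^ 2 * σ ^ 3) ^ 2 < 1 := by nlinarith
  have k1 : 2 * x ^ 2 * σ ^ 3 < 1 := by nlinarith [key]
  have k2 : -1 < 2 * x ^ 2 * σ ^ 3 := by nlinarith [key]
  have hx0 : 0 < x := by linarith
  refine ⟨?_, ?_, ?_⟩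
  · rw [div_lt_div_iff₀ h2x h2x]
    nlinarith [mul_pos (mul_pos (pow_pos hx0 3) hσ4) h2x]
  · intro hσneg
    rw [div_lt_iff₀ h2x]
    have h3 : -x < 2 * x ^ 3 * σ ^ 3 := by nlinarith
    nlinarith [mul_pos (show (0:ℝ) < -σ by linarith) (show (0:ℝ) < x + 2*x^3*σ^3 by linarith)]
  · intro hσpos
    rw [lt_div_iff₀ h2x]
    have : 2 * x ^ 3 * σ ^ 3 < x := by nlinarith
    nlinarith [mul_pos hσpos (show (0:ℝ) < x - 2*x^3*σ^3 by linarith)]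
end

section
/- Classification of real quartic degeneracies: For real numbers α, β, X, c, the polynomial identity ∀ w ∈ ℝ, (w − α)·(w − β)·(w² − X) + (α − β) = (w − c)⁴ holds if and only if (α, β, X, c) = (0, 0, 0, 0) or (α, β, X, c) = (2^{1/3}, −2^{1/3}, −2^{2/3}, 0). -/
/-- Classification of real quartic degeneracies: for reals `α, β, X, c`, the identity
`∀ w, (w − α)(w − β)(w² − X) + (α − β) = (w − c)⁴` holds iff
`(α, β, X, c) = (0, 0, 0, 0)` or `(α, β, X, c) = (2^{1/3}, −2^{1/3}, −2^{2/3}, 0)`. -/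
theorem quartic_degeneracy_classification (α β X c : ℝ) :
    (∀ w : ℝ, (w - α) * (w - β) * (w ^ 2 - X) + (α - β) = (w - c) ^ 4) ↔
      ((α = 0 ∧ β = 0 ∧ X = 0 ∧ c = 0) ∨
        (α = (2 : ℝ) ^ ((1 : ℝ) / 3) ∧ β = -((2 : ℝ) ^ ((1 : ℝ) / 3)) ∧
          X = -((2 : ℝ) ^ ((2 : ℝ) / 3)) ∧ c = 0)) := by
  have h13 : ((2 : ℝ) ^ ((1 : ℝ) / 3)) ^ 3 = 2 := by
    rw [← Real.rpow_natCast ((2 : ℝ) ^ ((1 : ℝ) / 3)) 3, ← Real.rpow_mul (by norm_num)]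
    norm_num
  have h23 : (2 : ℝ) ^ ((2 : ℝ) / 3) = ((2 : ℝ) ^ ((1 : ℝ) / 3)) ^ 2 := by
    rw [← Real.rpow_natCast ((2 : ℝ) ^ ((1 : ℝ) / 3)) 2, ← Real.rpow_mul (by norm_num)]
    norm_num
  constructor
  · intro h
    -- extract coefficient equations
    have e3 : -(α + β) + 4 * c = 0 := by
      linear_combination (-1/12) * h (-2) + (1/6) * h (-1) - (1/6) * h 1 + (1/12) * h 2
    have e2 : α * β - X - 6 * c ^ 2 = 0 := by
      linear_combination (-1/24) * h (-2) + (2/3) * h (-1) - (5/4) * h 0 + (2/3) * h 1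
        - (1/24) * h 2
    have e1 : X * (α + β) + 4 * c ^ 3 = 0 := by
      linear_combination (1/12) * h (-2) - (2/3) * h (-1) + (2/3) * h 1 - (1/12) * h 2
    have e0 : -(X * (α * β)) + α - β - c ^ 4 = 0 := by
      linear_combination h 0
    have hc : c = 0 := by
      by_contra hc
      -- X = -c^2, αβ = 5c^2, α+β = 4c : (α-β)^2 = -4c^2 < 0
      have hc2 : 0 < c ^ 2 := by positivity
      have h4 : 4 * c * (X + c ^ 2) = 0 := by linear_combination e1 + X * e3
      have hX : X = -c ^ 2 := by
        rcases mul_eq_zero.mp h4 with h' | h'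
        · exact absurd (by linarith : c = 0) hc
        · linarith
      have hsq : (α - β) ^ 2 = -4 * c ^ 2 := by
        linear_combination (-(α + β + 4 * c)) * e3 - 4 * e2 - 4 * hX
      nlinarith [sq_nonneg (α - β)]
    subst hc
    have hab : β = -α := by linarith [e3]
    subst hab
    have hXa : X = -α ^ 2 := by nlinarith [e2]
    subst hXa
    have key : α * (α ^ 3 - 2) = 0 := by nlinarith [e0]
    rcases mul_eq_zero.mp key with ha | ha
    · left; refine ⟨ha, by simp [ha], by simp [ha], rfl⟩
    · right
      have ha3 : α ^ 3 = 2 := by linarith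
      have hα : α = (2 : ℝ) ^ ((1 : ℝ) / 3) := by
        nlinarith [h13, sq_nonneg (α - (2 : ℝ) ^ ((1 : ℝ) / 3)), sq_nonneg (α + (2 : ℝ) ^ ((1 : ℝ) / 3)), Real.rpow_pos_of_pos (by norm_num : (0:ℝ) < 2) ((1:ℝ)/3)]
      exact ⟨hα, by rw [hα], by rw [h23, hα], rfl⟩
  · rintro (⟨ha, hb, hX, hc⟩ | ⟨ha, hb, hX, hc⟩) w
    · subst ha; subst hb; subst hX; subst hc; ring
    · subst ha; subst hb; subst hX; subst hc
      rw [h23]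
      linear_combination (-(2 : ℝ) ^ ((1 : ℝ) / 3)) * h13
end

section
/- Steepest-descent monotonicity along the quintic rays: Define F : ℂ → ℝ on the complement of {±2^{1/3}} by F(w) = Re(−w³/3 − 2^{2/3}·w) + log |w + 2^{1/3}| − log |w − 2^{1/3}| (real logarithms of complex absolute values). Then the function ρ ↦ F(ρ·exp(3πi/5)) is strictly decreasing on [0, ∞), and the function ρ ↦ F(ρ·exp(2πi/5)) is strictly increasing on [0, ∞). -/
/-!
Writing `a = 2^{1/3}` and `F = Re Φ` with
`Φ(w) = -w³/3 - a²w + log (a + w) - log (a - w)` (principal logarithms, holomorphic along both rays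
since `a ± ρc` stays off the cut), the relation `a³ = 2` collapses the derivative to
`Φ'(w) = w⁴ / (a² - w²)`. On the ray `w = ρc` with `c⁵ = ±1` this gives
`d/dρ F(ρc) = ± ρ⁴ · Re (a² - ρ²c²)⁻¹`, and `Re (c²) < 0` makes `Re (a² - ρ²c²)`, hence the last
factor, positive.
-/

open Complex Set

noncomputable def quinticPhase (a w : ℂ) : ℂ :=
  -w ^ 3 / 3 - a ^ 2 * w + log (a + w) - log (a - w)

lemma re_quinticPhase (a : ℝ) (w : ℂ) :
    (quinticPhase a w).re =
      (-w ^ 3 / 3 - (a : ℂ) ^ 2 * w).re + Real.log ‖w + a‖ - Real.log ‖w - a‖ := by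
  simp only [quinticPhase, sub_re, add_re, log_re, add_comm (a : ℂ) w, norm_sub_rev (a : ℂ) w]

lemma hasDerivAt_quinticPhase {a w : ℂ} (hp : a + w ∈ slitPlane) (hm : a - w ∈ slitPlane) :
    HasDerivAt (quinticPhase a) (-w ^ 2 - a ^ 2 + 1 / (a + w) + 1 / (a - w)) w := by
  have hcubic : HasDerivAt (fun w : ℂ => -w ^ 3 / 3 - a ^ 2 * w) (-w ^ 2 - a ^ 2) w := by
    refine (((hasDerivAt_pow 3 w).neg.div_const 3).sub
      ((hasDerivAt_id w).const_mul (a ^ 2))).congr_deriv ?_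
    ring
  have hlp := ((hasDerivAt_id w).const_add a).clog hp
  have hlm := ((hasDerivAt_id w).const_sub a).clog hm
  refine ((hcubic.add hlp).sub hlm).congr_deriv ?_
  simp only [id]
  ring

lemma quinticPhase_deriv_eq {a w : ℂ} (ha : a ^ 3 = 2) (hp : a + w ≠ 0) (hm : a - w ≠ 0) :
    -w ^ 2 - a ^ 2 + 1 / (a + w) + 1 / (a - w) = w ^ 4 / (a ^ 2 - w ^ 2) := by
  have hsq : a ^ 2 - w ^ 2 ≠ 0 := by
    rw [sq_sub_sq]
    exact mul_ne_zero hp hm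
  field_simp
  linear_combination (w ^ 2 * a - a ^ 3) * ha

lemma ofReal_add_ofReal_mul_mem_slitPlane {a : ℝ} (ha : 0 < a) {c : ℂ} (hc : c.im ≠ 0) (ρ : ℝ) :
    (a : ℂ) + ρ * c ∈ slitPlane := by
  rw [mem_slitPlane_iff]
  rcases eq_or_ne ρ 0 with rfl | hρ
  · simp [ha]
  · simp [hρ, hc]

lemma im_ne_zero_of_re_sq_neg {c : ℂ} (hc : (c ^ 2).re < 0) : c.im ≠ 0 := by
  intro h
  simp only [sq, mul_re, h, mul_zero, sub_zero] at hc
  nlinarith [mul_self_nonneg c.re]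

lemma hasDerivAt_re_quinticPhase_ray {a : ℝ} (ha : 0 < a) (ha3 : a ^ 3 = 2) {c : ℂ}
    (hc : c.im ≠ 0) {ε : ℝ} (hc5 : c ^ 5 = ε) (ρ : ℝ) :
    HasDerivAt (fun ρ : ℝ => (quinticPhase a (ρ * c)).re)
      (ε * ρ ^ 4 * ((a : ℂ) ^ 2 - ρ ^ 2 * c ^ 2)⁻¹.re) ρ := by
  have hp := ofReal_add_ofReal_mul_mem_slitPlane ha hc ρ
  have hm : (a : ℂ) - ρ * c ∈ slitPlane := by
    simpa [sub_eq_add_neg] using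
      ofReal_add_ofReal_mul_mem_slitPlane ha (c := -c) (by simpa using hc) ρ
  have hΦ := (hasDerivAt_quinticPhase hp hm).comp (ρ : ℂ) ((hasDerivAt_id _).mul_const c)
  rw [quinticPhase_deriv_eq (by exact_mod_cast ha3) (slitPlane_ne_zero hp)
    (slitPlane_ne_zero hm)] at hΦ
  convert HasDerivAt.real_of_complex (e := fun z => quinticPhase a (z * c)) hΦ using 1
  rw [← re_ofReal_mul]
  congr 1
  push_cast
  rw [← hc5]
  ring

lemma re_inv_pos_of_re_pos {z : ℂ} (hz : 0 < z.re) : 0 < z⁻¹.re := by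
  rw [inv_re]
  exact div_pos hz (normSq_pos.mpr fun h => by simp [h] at hz)

lemma re_inv_sq_sub_sq_mul_pos {a : ℝ} (ha : a ≠ 0) {c : ℂ} (hc : (c ^ 2).re < 0) (ρ : ℝ) :
    0 < ((a : ℂ) ^ 2 - ρ ^ 2 * c ^ 2)⁻¹.re := by
  refine re_inv_pos_of_re_pos ?_
  rw [sub_re, ← ofReal_pow, ← ofReal_pow, ofReal_re, re_ofReal_mul]
  nlinarith [sq_nonneg ρ, pow_pos (abs_pos.mpr ha) 2, sq_abs a]

theorem strictMonoOn_re_quinticPhase_ray {a : ℝ} (ha : 0 < a) (ha3 : a ^ 3 = 2) {c : ℂ}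
    (hc : (c ^ 2).re < 0) (hc5 : c ^ 5 = 1) :
    StrictMonoOn (fun ρ : ℝ => (quinticPhase a (ρ * c)).re) (Ici 0) := by
  have hderiv := hasDerivAt_re_quinticPhase_ray ha ha3 (im_ne_zero_of_re_sq_neg hc)
    (ε := 1) (by simpa using hc5)
  refine strictMonoOn_of_deriv_pos (convex_Ici 0)
    (fun ρ _ => (hderiv ρ).continuousAt.continuousWithinAt) fun ρ hρ => ?_
  rw [interior_Ici] at hρ
  rw [(hderiv ρ).deriv, one_mul]
  exact mul_pos (pow_pos hρ 4) (re_inv_sq_sub_sq_mul_pos ha.ne' hc ρ)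

theorem strictAntiOn_re_quinticPhase_ray {a : ℝ} (ha : 0 < a) (ha3 : a ^ 3 = 2) {c : ℂ}
    (hc : (c ^ 2).re < 0) (hc5 : c ^ 5 = -1) :
    StrictAntiOn (fun ρ : ℝ => (quinticPhase a (ρ * c)).re) (Ici 0) := by
  have hderiv := hasDerivAt_re_quinticPhase_ray ha ha3 (im_ne_zero_of_re_sq_neg hc)
    (ε := -1) (by simpa using hc5)
  refine strictAntiOn_of_deriv_neg (convex_Ici 0)
    (fun ρ _ => (hderiv ρ).continuousAt.continuousWithinAt) fun ρ hρ => ?_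
  rw [interior_Ici] at hρ
  rw [(hderiv ρ).deriv, mul_assoc, neg_one_mul, neg_neg_iff_pos]
  exact mul_pos (pow_pos hρ 4) (re_inv_sq_sub_sq_mul_pos ha.ne' hc ρ)

lemma exp_ofReal_mul_I_pow (θ : ℝ) (n : ℕ) : exp (θ * I) ^ n = exp (↑(n * θ) * I) := by
  rw [← exp_nat_mul]
  push_cast
  ring_nf

lemma exp_nat_mul_pi_div_mul_I_pow (k n : ℕ) (hn : n ≠ 0) :
    exp (↑(k * Real.pi / n) * I) ^ n = (-1) ^ k := by
  rw [exp_ofReal_mul_I_pow, ← exp_pi_mul_I, ← exp_nat_mul]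
  congr 1
  push_cast
  field_simp

/-- Steepest-descent monotonicity along the quintic rays: with
`F(w) = Re(−w³/3 − 2^{2/3}·w) + log |w + 2^{1/3}| − log |w − 2^{1/3}|`,
the function `ρ ↦ F(ρ·e^{3πi/5})` is strictly decreasing on `[0, ∞)` and
`ρ ↦ F(ρ·e^{2πi/5})` is strictly increasing on `[0, ∞)`. -/
theorem quintic_rays_steepest_descent :
    StrictAntiOn
        (fun ρ : ℝ =>
          (-(((ρ : ℂ) * Complex.exp (((3 * Real.pi / 5 : ℝ) : ℂ) * Complex.I)) ^ 3) / 3 -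
              (((2 : ℝ) ^ ((2 : ℝ) / 3) : ℝ) : ℂ) *
                ((ρ : ℂ) * Complex.exp (((3 * Real.pi / 5 : ℝ) : ℂ) * Complex.I))).re +
            Real.log (norm
              ((ρ : ℂ) * Complex.exp (((3 * Real.pi / 5 : ℝ) : ℂ) * Complex.I) +
                (((2 : ℝ) ^ ((1 : ℝ) / 3) : ℝ) : ℂ))) -
            Real.log (norm
              ((ρ : ℂ) * Complex.exp (((3 * Real.pi / 5 : ℝ) : ℂ) * Complex.I) -
                (((2 : ℝ) ^ ((1 : ℝ) / 3) : ℝ) : ℂ))))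
        (Set.Ici 0) ∧
      StrictMonoOn
        (fun ρ : ℝ =>
          (-(((ρ : ℂ) * Complex.exp (((2 * Real.pi / 5 : ℝ) : ℂ) * Complex.I)) ^ 3) / 3 -
              (((2 : ℝ) ^ ((2 : ℝ) / 3) : ℝ) : ℂ) *
                ((ρ : ℂ) * Complex.exp (((2 * Real.pi / 5 : ℝ) : ℂ) * Complex.I))).re +
            Real.log (norm
              ((ρ : ℂ) * Complex.exp (((2 * Real.pi / 5 : ℝ) : ℂ) * Complex.I) +
                (((2 : ℝ) ^ ((1 : ℝ) / 3) : ℝ) : ℂ))) -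
            Real.log (norm
              ((ρ : ℂ) * Complex.exp (((2 * Real.pi / 5 : ℝ) : ℂ) * Complex.I) -
                (((2 : ℝ) ^ ((1 : ℝ) / 3) : ℝ) : ℂ))))
        (Set.Ici 0) := by
  have ha : (0 : ℝ) < 2 ^ ((1 : ℝ) / 3) := by positivity
  have ha3 : ((2 : ℝ) ^ ((1 : ℝ) / 3)) ^ 3 = 2 := by
    rw [← Real.rpow_natCast, ← Real.rpow_mul zero_le_two]
    norm_num
  have ha2 : (((2 : ℝ) ^ ((2 : ℝ) / 3) : ℝ) : ℂ) = (((2 : ℝ) ^ ((1 : ℝ) / 3) : ℝ) : ℂ) ^ 2 := by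
    rw [← ofReal_pow, ← Real.rpow_natCast, ← Real.rpow_mul zero_le_two]
    norm_num
  simp only [ha2, ← re_quinticPhase]
  have hpi := Real.pi_pos
  refine ⟨strictAntiOn_re_quinticPhase_ray ha ha3 ?_ ?_,
    strictMonoOn_re_quinticPhase_ray ha ha3 ?_ ?_⟩
  · rw [exp_ofReal_mul_I_pow, exp_ofReal_mul_I_re]
    exact Real.cos_neg_of_pi_div_two_lt_of_lt (by push_cast; linarith) (by push_cast; linarith)
  · rw [show 3 * Real.pi / 5 = ((3 : ℕ) : ℝ) * Real.pi / (5 : ℕ) by norm_num,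
      exp_nat_mul_pi_div_mul_I_pow 3 5 (by norm_num)]
    norm_num
  · rw [exp_ofReal_mul_I_pow, exp_ofReal_mul_I_re]
    exact Real.cos_neg_of_pi_div_two_lt_of_lt (by push_cast; linarith) (by push_cast; linarith)
  · rw [show 2 * Real.pi / 5 = ((2 : ℕ) : ℝ) * Real.pi / (5 : ℕ) by norm_num,
      exp_nat_mul_pi_div_mul_I_pow 2 5 (by norm_num)]
    norm_num
end
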